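/- arXiv:2510.04471 — 6 statements merged into one kernel-verified Lean document; each statement's English description precedes it below -/
import Mathlib

section
/- With P_M and Q_M as defined, the product P_M * (-J_k - I_k) * Q_M equals the diagonal matrix diag(1, 1, ..., 1, k+1). -/
theorem stmt_6 (k : ℕ) (hk : 2 ≤ k)
    (P Q : Matrix (Fin k) (Fin k) ℤ)
    (hP : ∀ i j : Fin k, P i j =
      if (i : ℕ) = k - 1 then (if (j : ℕ) = k - 1 then 1 else -(k : ℤ))
      else (if i = j then 1 else 0))
    (hQ : ∀ i j : Fin k, Q i j =
      if (i : ℕ) = k - 1 then (if (j : ℕ) = k - 1 then -(k : ℤ) else -((k : ℤ) - 1))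
      else (if (j : ℕ) = k - 1 then 1 else (if i = j then 0 else 1))) :
    P * (-(Matrix.of fun _ _ => (1 : ℤ)) - 1) * Q =
      Matrix.diagonal (fun i : Fin k => if (i : ℕ) = k - 1 then (k : ℤ) + 1 else 1) := by
  have hk0 : 0 < k := by omega
  set A : Matrix (Fin k) (Fin k) ℤ := -(Matrix.of fun _ _ => (1 : ℤ)) - 1 with hAdef
  set L : Fin k := ⟨k - 1, by omega⟩ with hLdef
  have hcast : ∀ m : Fin k, ((m : ℕ) = k - 1) ↔ m = L := by
    intro m; rw [Fin.ext_iff]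
  -- column sums of Q are all -1
  have colsum : ∀ j : Fin k, ∑ m, Q m j = -1 := by
    intro j
    by_cases hj : (j : ℕ) = k - 1
    · have hpt : ∀ m : Fin k, Q m j =
          1 + (if m = L then -(k : ℤ) - 1 else 0) := by
        intro m
        rw [hQ]
        simp only [hcast, hj, if_true]
        split_ifs <;> ring
      rw [Finset.sum_congr rfl fun m _ => hpt m]
      rw [Finset.sum_add_distrib, Finset.sum_const, Finset.sum_ite_eq']
      simp [Finset.card_univ]
      ring
    · have hjL : j ≠ L := fun h => hj (by rw [h])
      have hpt : ∀ m : Fin k, Q m j =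
          1 + (if m = L then -(k : ℤ) else 0) + (if m = j then -1 else 0) := by
        intro m
        rw [hQ]
        simp only [hcast, hj, if_false]
        split_ifs with h1 h2 h2
        · exact absurd (h2.symm.trans h1) hjL
        · ring
        · ring
        · ring
      rw [Finset.sum_congr rfl fun m _ => hpt m]
      rw [Finset.sum_add_distrib, Finset.sum_add_distrib, Finset.sum_const,
        Finset.sum_ite_eq', Finset.sum_ite_eq']
      simp [Finset.card_univ]
  -- row sums of P
  have rowsum : ∀ i : Fin k, ∑ l, P i l =
      if (i : ℕ) = k - 1 then 1 - (k : ℤ) * ((k : ℤ) - 1) else 1 := by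
    intro i
    by_cases hi : (i : ℕ) = k - 1
    · have hpt : ∀ l : Fin k, P i l =
          -(k : ℤ) + (if l = L then 1 + (k : ℤ) else 0) := by
        intro l
        rw [hP]
        simp only [hcast, hi, if_true]
        split_ifs <;> ring
      rw [Finset.sum_congr rfl fun l _ => hpt l]
      rw [Finset.sum_add_distrib, Finset.sum_const, Finset.sum_ite_eq']
      simp [Finset.card_univ, hi]
      ring
    · have hpt : ∀ l : Fin k, P i l = (if i = l then (1 : ℤ) else 0) := by
        intro l
        rw [hP, if_neg hi]
      rw [Finset.sum_congr rfl fun l _ => hpt l]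
      rw [Finset.sum_ite_eq]
      simp [hi]
  -- (P * A) i m = -(row sum) - P i m
  have hPA : ∀ i m : Fin k,
      (P * A) i m = -(∑ l, P i l) - P i m := by
    intro i m
    rw [Matrix.mul_apply]
    have hpt : ∀ l : Fin k,
        P i l * A l m
          = -(P i l) + (if l = m then -(P i l) else 0) := by
      intro l
      rw [hAdef]
      simp only [Matrix.sub_apply, Matrix.neg_apply, Matrix.of_apply, Matrix.one_apply]
      split_ifs <;> ring
    rw [Finset.sum_congr rfl fun l _ => hpt l]
    rw [Finset.sum_add_distrib, Finset.sum_ite_eq', Finset.sum_neg_distrib]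
    simp
    ring
  ext i j
  rw [Matrix.mul_apply]
  have hpt : ∀ m : Fin k,
      (P * A) i m * Q m j
        = -(∑ l, P i l) * Q m j - P i m * Q m j := by
    intro m; rw [hPA]; ring
  rw [Finset.sum_congr rfl fun m _ => hpt m, Finset.sum_sub_distrib,
    ← Finset.mul_sum, colsum]
  by_cases hi : (i : ℕ) = k - 1
  · -- i is the last row
    have hiL : i = L := (hcast i).mp hi
    have hpt2 : ∀ m : Fin k, P i m * Q m j
        = -(k : ℤ) * Q m j + (if m = L then (1 + (k : ℤ)) * Q m j else 0) := by
      intro m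
      rw [hP]
      simp only [hcast, hi, if_true]
      split_ifs <;> ring
    rw [Finset.sum_congr rfl fun m _ => hpt2 m, Finset.sum_add_distrib,
      ← Finset.mul_sum, colsum, Finset.sum_ite_eq']
    rw [rowsum, hQ, Matrix.diagonal_apply]
    by_cases hj : (j : ℕ) = k - 1
    · have hij : i = j := by
        rw [hiL, (hcast j).mp hj]
      simp only [hi, hj, hij, (hcast L).mpr rfl, if_true, Finset.mem_univ, if_true, if_false]
      ring
    · have hij : i ≠ j := fun h => hj (h ▸ hi)
      simp only [hi, hj, hij, (hcast L).mpr rfl, show L ≠ j from hiL ▸ hij, if_true, if_false, Finset.mem_univ, if_true, if_false]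
      ring
  · -- i is not the last row
    have hpt2 : ∀ m : Fin k, P i m * Q m j = (if i = m then Q m j else 0) := by
      intro m
      rw [hP, if_neg hi]
      split_ifs <;> ring
    rw [Finset.sum_congr rfl fun m _ => hpt2 m, Finset.sum_ite_eq]
    rw [rowsum, hQ, Matrix.diagonal_apply]
    by_cases hj : (j : ℕ) = k - 1
    · have hij : i ≠ j := fun h => hi (h ▸ hj)
      simp only [hi, hj, hij, if_false, if_true, Finset.mem_univ, if_true, if_false]
      ring
    · by_cases hij : i = j
      · simp only [hi, hj, hij, if_false, if_true, Finset.mem_univ, if_true, if_false]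
        ring
      · simp only [hi, hj, hij, if_false, Finset.mem_univ, if_true, if_false]
        ring
end

section
/- The Smith normal form of the (m+1)×(m+1) integer matrix [[m, 1ᵀ],[1, (k+1)·I_m]] is diag(1, 1, k+1, ..., k+1, k(k+1)m), where k+1 appears m-2 times, provided m ≥ 2 and k ≥ 1. -/
open Finset

/-- entries of the left transform P -/
def eL (m k i t : ℕ) : ℤ :=
  if i = 0 then (if t = 1 then 1 else 0)
  else if i = 1 then (if t = 0 then 1 else if t = 1 then -(m:ℤ) else 0)
  else if i = m then (if t = 0 then -((k:ℤ)+1) else if t = 1 then (m:ℤ)*k+1 else 1)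
  else (if t = 1 then -1 else if t = i+1 then 1 else 0)

/-- entries of P⁻¹ -/
def eV (m k t j : ℕ) : ℤ :=
  if t = 0 then (if j = 0 then (m:ℤ) else if j = 1 then 1 else 0)
  else if t = 1 then (if j = 0 then 1 else 0)
  else if t = 2 then (if j = 0 then 1 else if j = 1 then (k:ℤ)+1 else if j = m then 1 else -1)
  else (if j = 0 then 1 else if j = t-1 then 1 else 0)

/-- entries of the right transform Q -/
def eR (m k i t : ℕ) : ℤ :=
  if i = 0 then (if t = 0 then 1 else if t = m then -((k:ℤ)+1) else 0)
  else if i = 1 then (if t = m then 1 else 0)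
  else if i = 2 then (if t = 1 then 1 else if t = m then (m:ℤ)*k+1 else if t = 0 then 0 else -1)
  else (if t = i-1 then 1 else if t = m then 1 else 0)

/-- entries of Q⁻¹ -/
def eW (m k t j : ℕ) : ℤ :=
  if t = 0 then (if j = 0 then 1 else if j = 1 then (k:ℤ)+1 else 0)
  else if t = 1 then (if j = 0 then 0 else if j = 1 then 1-(m:ℤ)*((k:ℤ)+1) else 1)
  else if t = m then (if j = 1 then 1 else 0)
  else (if j = 1 then -1 else if j = t+1 then 1 else 0)

def dD (m k t : ℕ) : ℤ :=
  if t < 2 then 1 else if t < m then (k:ℤ)+1 else (k:ℤ)*((k:ℤ)+1)*(m:ℤ)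

lemma split_sum (m : ℕ) (hm : 2 ≤ m) (f : ℕ → ℤ) :
    ∑ t ∈ Finset.range (m+1), f t
      = f 0 + f 1 + (∑ t ∈ Finset.Ico 2 m, f t) + f m := by
  rw [Finset.sum_range_succ]
  congr 1
  rw [Finset.range_eq_Ico,
    ← Finset.sum_Ico_consecutive _ (by omega : 0 ≤ 2) hm]
  congr 1
  show ∑ t ∈ Finset.Ico 0 2, f t = f 0 + f 1
  rw [← Finset.range_eq_Ico, Finset.sum_range_succ, Finset.sum_range_one]

lemma mid1 (m : ℕ) (f : ℕ → ℤ) (c : ℤ) (p : ℕ)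
    (hf : ∀ t, 2 ≤ t → t < m → t ≠ p → f t = c) :
    ∑ t ∈ Finset.Ico 2 m, f t
      = ((m - 2 : ℕ) : ℤ) * c + (if 2 ≤ p ∧ p < m then f p - c else 0) := by
  have h : ∀ t ∈ Finset.Ico 2 m, f t = c + (if t = p then f p - c else 0) := by
    intro t ht
    simp only [Finset.mem_Ico] at ht
    by_cases h1 : t = p
    · subst h1; simp
    · rw [hf t ht.1 ht.2 h1]; simp [h1]
  rw [Finset.sum_congr rfl h, Finset.sum_add_distrib, Finset.sum_const,
    Finset.sum_ite_eq' , Nat.card_Ico]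
  simp [Finset.mem_Ico, nsmul_eq_mul]

lemma mid2 (m : ℕ) (f : ℕ → ℤ) (c : ℤ) (p q : ℕ) (hpq : p ≠ q)
    (hf : ∀ t, 2 ≤ t → t < m → t ≠ p → t ≠ q → f t = c) :
    ∑ t ∈ Finset.Ico 2 m, f t
      = ((m - 2 : ℕ) : ℤ) * c + (if 2 ≤ p ∧ p < m then f p - c else 0)
          + (if 2 ≤ q ∧ q < m then f q - c else 0) := by
  have h : ∀ t ∈ Finset.Ico 2 m, f t
      = c + ((if t = p then f p - c else 0) + (if t = q then f q - c else 0)) := by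
    intro t ht
    simp only [Finset.mem_Ico] at ht
    by_cases h1 : t = p
    · subst h1; simp [hpq]
    · by_cases h2 : t = q
      · subst h2; simp [h1]
      · rw [hf t ht.1 ht.2 h1 h2]; simp [h1, h2]
  rw [Finset.sum_congr rfl h, Finset.sum_add_distrib, Finset.sum_add_distrib,
    Finset.sum_const, Finset.sum_ite_eq', Finset.sum_ite_eq', Nat.card_Ico]
  simp only [Finset.mem_Ico, nsmul_eq_mul]
  ring
set_option maxHeartbeats 1000000 in
lemma lemA (m k : ℕ) (hm : 2 ≤ m) (i j : ℕ) (hi : i ≤ m) (hj : j ≤ m) :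
    ∑ t ∈ Finset.range (m+1), eL m k i t * eV m k t j = if i = j then 1 else 0 := by
  rw [split_sum m hm]
  by_cases hi0 : i = 0
  · subst hi0
    rw [mid1 m _ 0 0 (by
      intro t h2 hlt _
      have h1 : t ≠ 1 := by omega
      simp [eL, h1])]
    simp only [eL, eV]
    split_ifs <;> first | contradiction | omega | ring
  · by_cases hi1 : i = 1
    · subst hi1
      rw [mid1 m _ 0 0 (by
        intro t h2 hlt _
        have h0 : t ≠ 0 := by omega
        have h1 : t ≠ 1 := by omega
        simp [eL, h0, h1])]
      simp only [eL, eV]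
      split_ifs <;> first | contradiction | omega | ring
    · by_cases him : i = m
      · subst i
        have hLmid : ∀ t, 2 ≤ t → t ≤ m → eL m k m t = 1 := by
          intro t h2 hle
          simp [eL, show t ≠ 0 by omega, show t ≠ 1 by omega, hi0, hi1]
        by_cases hj0 : j = 0
        · subst hj0
          rw [mid1 m _ 1 0 (by
            intro t h2 hlt _
            rw [hLmid t h2 (by omega), one_mul]
            simp [eV, show t ≠ 0 by omega, show t ≠ 1 by omega])]
          simp only [eL, eV]
          rw [show ((m - 2 : ℕ) : ℤ) = (m:ℤ) - 2 by omega]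
          split_ifs <;> first | contradiction | omega | ring
        · by_cases hj1 : j = 1
          · subst hj1
            rw [mid1 m _ 0 2 (by
              intro t h2 hlt hne
              rw [hLmid t h2 (by omega), one_mul]
              simp [eV, show t ≠ 0 by omega, show t ≠ 1 by omega, hne,
                show (1:ℕ) ≠ 0 by omega, show (1:ℕ) ≠ t - 1 by omega])]
            simp only [eL, eV]
            split_ifs <;> first | contradiction | omega | ring
          · by_cases hjm : j = m
            · subst j
              rw [mid1 m _ 0 2 (by
                intro t h2 hlt hne
                rw [hLmid t h2 (by omega), one_mul]
                simp [eV, show t ≠ 0 by omega, show t ≠ 1 by omega, hne,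
                  hi0, hi1, show m ≠ t - 1 by omega])]
              simp only [eL, eV]
              split_ifs <;> first | contradiction | omega | ring
            · -- 2 ≤ j < m
              have h2j : 2 ≤ j := by omega
              have hjm' : j < m := by omega
              rw [mid2 m _ 0 2 (j+1) (by omega) (by
                intro t h2 hlt hne2 hnej
                rw [hLmid t h2 (by omega), one_mul]
                simp [eV, show t ≠ 0 by omega, show t ≠ 1 by omega, hne2,
                  hj0, hj1, show j ≠ t - 1 by omega])]
              simp only [eL, eV]
              split_ifs <;> first | contradiction | omega | ring
      · -- middle row: 2 ≤ i < m
        have h2i : 2 ≤ i := by omega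
        have him' : i < m := by omega
        rw [mid1 m _ 0 (i+1) (by
          intro t h2 hlt hne
          have ht1 : t ≠ 1 := by omega
          simp [eL, ht1, hne, show t ≠ 0 by omega, show t ≠ m by omega,
            hi0, hi1, him])]
        simp only [eL, eV]
        split_ifs <;> first | contradiction | omega | ring

set_option maxHeartbeats 1000000 in
lemma lemB (m k : ℕ) (hm : 2 ≤ m) (i j : ℕ) (hi : i ≤ m) (hj : j ≤ m) :
    ∑ t ∈ Finset.range (m+1), eR m k i t * eW m k t j = if i = j then 1 else 0 := by
  rw [split_sum m hm]
  by_cases hi0 : i = 0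
  · subst hi0
    rw [mid1 m _ 0 0 (by
      intro t h2 hlt _
      simp [eR, show t ≠ 0 by omega, show t ≠ m by omega])]
    simp only [eR, eW]
    split_ifs <;> first | contradiction | omega | ring
  · by_cases hi1 : i = 1
    · subst hi1
      rw [mid1 m _ 0 0 (by
        intro t h2 hlt _
        simp [eR, show t ≠ m by omega])]
      simp only [eR, eW]
      split_ifs <;> first | contradiction | omega | ring
    · by_cases hi2 : i = 2
      · subst hi2
        have hWmid : ∀ t, 2 ≤ t → t < m →
            eR m k 2 t * eW m k t j = (if j = 1 then 1 else 0) - (if j = t + 1 then 1 else 0) := by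
          intro t h2 hlt
          have hR : eR m k 2 t = -1 := by
            simp [eR, show t ≠ 0 by omega, show t ≠ 1 by omega, show t ≠ m by omega]
          rw [hR]
          simp only [eW, if_neg (show t ≠ 0 by omega), if_neg (show t ≠ 1 by omega),
            if_neg (show t ≠ m by omega)]
          split_ifs <;> first | contradiction | omega | ring
        by_cases hj1 : j = 1
        · subst j
          rw [mid1 m _ 1 0 (by
            intro t h2 hlt _
            rw [hWmid t h2 hlt]
            simp [show (1:ℕ) ≠ t + 1 by omega, show t ≠ 0 by omega])]
          simp only [eR, eW]
          rw [show ((m - 2 : ℕ) : ℤ) = (m:ℤ) - 2 by omega]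
          split_ifs <;> first | contradiction | omega | ring
        · by_cases hj3 : 3 ≤ j
          · rw [mid1 m _ 0 (j-1) (by
              intro t h2 hlt hne
              rw [hWmid t h2 hlt]
              simp [hj1, show j ≠ t + 1 by omega])]
            rw [if_pos (show 2 ≤ j - 1 ∧ j - 1 < m by omega),
              hWmid (j-1) (by omega) (by omega)]
            simp only [eR, eW]
            split_ifs <;> first | contradiction | omega | ring
          · -- j = 0 or 2
            rw [mid1 m _ 0 0 (by
              intro t h2 hlt _
              rw [hWmid t h2 hlt]
              simp [hj1, show j ≠ t + 1 by omega])]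
            simp only [eR, eW]
            split_ifs <;> first | contradiction | omega | ring
      · -- 3 ≤ i ≤ m
        have h3i : 3 ≤ i := by omega
        rw [mid1 m _ 0 (i-1) (by
          intro t h2 hlt hne
          simp [eR, hi0, hi1, hi2, show t ≠ i - 1 by omega, show t ≠ m by omega])]
        rw [if_pos (show 2 ≤ i - 1 ∧ i - 1 < m by omega)]
        have e0 : eR m k i 0 = 0 := by
          simp [eR, hi0, hi1, hi2, show (0:ℕ) ≠ i-1 by omega, show (0:ℕ) ≠ m by omega]
        have e1 : eR m k i 1 = 0 := by
          simp [eR, hi0, hi1, hi2, show (1:ℕ) ≠ i-1 by omega, show (1:ℕ) ≠ m by omega]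
        have em : eR m k i m = 1 := by
          simp [eR, hi0, hi1, hi2, show m ≠ i-1 by omega]
        have ep : eR m k i (i-1) = 1 := by
          simp [eR, hi0, hi1, hi2]
        rw [e0, e1, em, ep, one_mul, one_mul, zero_mul, zero_mul]
        have w1 : eW m k m j = if j = 1 then 1 else 0 := by
          simp [eW, show m ≠ 0 by omega, show m ≠ 1 by omega]
        have w2 : eW m k (i-1) j = (if j = 1 then -1 else if j = i then 1 else 0) := by
          simp only [eW, if_neg (show i-1 ≠ 0 by omega), if_neg (show i-1 ≠ 1 by omega),
            if_neg (show i-1 ≠ m by omega)]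
          rw [show i - 1 + 1 = i from by omega]
        rw [w1, w2]
        split_ifs <;> first | contradiction | omega | ring

set_option maxHeartbeats 1000000 in
lemma lemC (m k : ℕ) (hm : 2 ≤ m) (i j : ℕ) (hi : i ≤ m) (hj : j ≤ m) :
    ∑ t ∈ Finset.range (m+1), eV m k i t * (dD m k t * eW m k t j)
      = if i = 0 ∧ j = 0 then (m : ℤ)
        else if i = 0 ∨ j = 0 then 1
        else if i = j then (k : ℤ) + 1 else 0 := by
  have hd0 : dD m k 0 = 1 := by simp [dD]
  have hd1 : dD m k 1 = 1 := by simp [dD]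
  have hdm : dD m k m = (k:ℤ)*((k:ℤ)+1)*m := by simp [dD, show ¬ m < 2 by omega]
  have w0 : eW m k 0 j = (if j = 0 then 1 else if j = 1 then (k:ℤ)+1 else 0) := by
    simp [eW]
  have w1 : eW m k 1 j = (if j = 0 then 0 else if j = 1 then 1-(m:ℤ)*((k:ℤ)+1) else 1) := by
    simp [eW]
  have wm : eW m k m j = (if j = 1 then 1 else 0) := by
    simp [eW, show m ≠ 0 by omega, show m ≠ 1 by omega]
  rw [split_sum m hm]
  by_cases hi0 : i = 0
  · subst hi0
    rw [mid1 m _ 0 0 (by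
      intro t h2 hlt _
      simp [eV, show t ≠ 0 by omega, show t ≠ 1 by omega])]
    have e0 : eV m k 0 0 = (m:ℤ) := by simp [eV]
    have e1 : eV m k 0 1 = 1 := by simp [eV]
    have em' : eV m k 0 m = 0 := by
      simp [eV, show m ≠ 0 by omega, show m ≠ 1 by omega]
    rw [e0, e1, em', hd0, hd1, w0, w1, zero_mul]
    split_ifs <;> first | contradiction | omega | ring1 | simp_all
  · by_cases hi1 : i = 1
    · subst i
      rw [mid1 m _ 0 0 (by
        intro t h2 hlt _
        simp [eV, show t ≠ 0 by omega])]
      have e0 : eV m k 1 0 = 1 := by simp [eV]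
      have e1 : eV m k 1 1 = 0 := by simp [eV]
      have em' : eV m k 1 m = 0 := by simp [eV, show m ≠ 0 by omega]
      rw [e0, e1, em', hd0, w0, zero_mul, zero_mul]
      split_ifs <;> first | contradiction | omega | ring1 | simp_all
    · by_cases hi2 : i = 2
      · subst i
        have e0 : eV m k 2 0 = 1 := by simp [eV]
        have e1 : eV m k 2 1 = (k:ℤ)+1 := by simp [eV]
        have em' : eV m k 2 m = 1 := by
          simp [eV, show m ≠ 0 by omega, show m ≠ 1 by omega]
        have hmidv : ∀ t, 2 ≤ t → t < m →
            eV m k 2 t * (dD m k t * eW m k t j)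
              = ((k:ℤ)+1) * ((if j = 1 then 1 else 0) - (if j = t + 1 then 1 else 0)) := by
          intro t h2 hlt
          have hv : eV m k 2 t = -1 := by
            simp [eV, show t ≠ 0 by omega, show t ≠ 1 by omega, show t ≠ m by omega]
          have hd : dD m k t = (k:ℤ)+1 := by
            simp [dD, show ¬ t < 2 by omega, hlt]
          rw [hv, hd]
          simp only [eW, if_neg (show t ≠ 0 by omega), if_neg (show t ≠ 1 by omega),
            if_neg (show t ≠ m by omega)]
          split_ifs <;> first | contradiction | omega | ring1 | simp_all
        by_cases hj1 : j = 1
        · subst j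
          rw [mid1 m _ ((k:ℤ)+1) 0 (by
            intro t h2 hlt _
            rw [hmidv t h2 hlt]
            simp [show (1:ℕ) ≠ t + 1 by omega, show t ≠ 0 by omega])]
          rw [e0, e1, em', hd0, hd1, hdm, w0, w1, wm]
          rw [show ((m - 2 : ℕ) : ℤ) = (m:ℤ) - 2 by omega]
          split_ifs <;> first | contradiction | omega | ring1 | simp_all
        · by_cases hj3 : 3 ≤ j
          · rw [mid1 m _ 0 (j-1) (by
              intro t h2 hlt hne
              rw [hmidv t h2 hlt]
              simp [hj1, show j ≠ t + 1 by omega])]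
            rw [if_pos (show 2 ≤ j - 1 ∧ j - 1 < m by omega),
              hmidv (j-1) (by omega) (by omega),
              show j - 1 + 1 = j from by omega]
            rw [e0, e1, em', hd0, hd1, hdm, w0, w1, wm]
            split_ifs <;> first | contradiction | omega | ring1 | simp_all
          · rw [mid1 m _ 0 0 (by
              intro t h2 hlt _
              rw [hmidv t h2 hlt]
              simp [hj1, show j ≠ t + 1 by omega])]
            rw [e0, e1, em', hd0, hd1, hdm, w0, w1, wm]
            split_ifs <;> first | contradiction | omega | ring1 | simp_all
      · -- 3 ≤ i ≤ m
        have h3i : 3 ≤ i := by omega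
        rw [mid1 m _ 0 (i-1) (by
          intro t h2 hlt hne
          simp [eV, hi0, hi1, hi2, show t ≠ 0 by omega, show t ≠ i - 1 by omega])]
        rw [if_pos (show 2 ≤ i - 1 ∧ i - 1 < m by omega)]
        have e0 : eV m k i 0 = 1 := by simp [eV, hi0, hi1, hi2]
        have e1 : eV m k i 1 = 0 := by
          simp [eV, hi0, hi1, hi2, show (1:ℕ) ≠ i-1 by omega]
        have em' : eV m k i m = 0 := by
          simp [eV, hi0, hi1, hi2, show m ≠ 0 by omega, show m ≠ i-1 by omega]
        have ep : eV m k i (i-1) = 1 := by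
          simp [eV, hi0, hi1, hi2, show i-1 ≠ 0 by omega]
        rw [e0, e1, em', ep, one_mul, one_mul, zero_mul, zero_mul]
        have hd : dD m k (i-1) = (k:ℤ)+1 := by
          simp [dD, show ¬ i-1 < 2 by omega, show i-1 < m by omega]
        have w2 : eW m k (i-1) j = (if j = 1 then -1 else if j = i then 1 else 0) := by
          simp only [eW, if_neg (show i-1 ≠ 0 by omega), if_neg (show i-1 ≠ 1 by omega),
            if_neg (show i-1 ≠ m by omega)]
          rw [show i - 1 + 1 = i from by omega]
        rw [hd, hd0, w0, w2]
        split_ifs <;> first | contradiction | omega | ring1 | simp_all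


theorem stmt_9 (m k : ℕ) (hm : 2 ≤ m) (hk : 1 ≤ k)
    (N : Matrix (Fin (m+1)) (Fin (m+1)) ℤ)
    (hN : ∀ i j : Fin (m+1), N i j =
      if (i : ℕ) = 0 ∧ (j : ℕ) = 0 then (m : ℤ)
      else if (i : ℕ) = 0 ∨ (j : ℕ) = 0 then 1
      else if i = j then (k : ℤ) + 1 else 0) :
    ∃ P Q : Matrix (Fin (m+1)) (Fin (m+1)) ℤ, IsUnit P.det ∧ IsUnit Q.det ∧
      P * N * Q = Matrix.diagonal (fun i : Fin (m+1) =>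
        if (i : ℕ) < 2 then (1 : ℤ)
        else if (i : ℕ) < m then (k : ℤ) + 1
        else (k : ℤ) * ((k : ℤ) + 1) * m) := by
  set P : Matrix (Fin (m+1)) (Fin (m+1)) ℤ := Matrix.of fun i j => eL m k ↑i ↑j with hP
  set V : Matrix (Fin (m+1)) (Fin (m+1)) ℤ := Matrix.of fun i j => eV m k ↑i ↑j with hV
  set R : Matrix (Fin (m+1)) (Fin (m+1)) ℤ := Matrix.of fun i j => eR m k ↑i ↑j with hR
  set W : Matrix (Fin (m+1)) (Fin (m+1)) ℤ := Matrix.of fun i j => eW m k ↑i ↑j with hW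
  set Dm : Matrix (Fin (m+1)) (Fin (m+1)) ℤ := Matrix.diagonal (fun i : Fin (m+1) =>
        if (i : ℕ) < 2 then (1 : ℤ)
        else if (i : ℕ) < m then (k : ℤ) + 1
        else (k : ℤ) * ((k : ℤ) + 1) * m) with hDm
  have hdiag : ∀ i : Fin (m+1), (if (i : ℕ) < 2 then (1 : ℤ)
      else if (i : ℕ) < m then (k : ℤ) + 1
      else (k : ℤ) * ((k : ℤ) + 1) * m) = dD m k ↑i := by
    intro i; simp [dD]
  have hPV : P * V = 1 := by
    ext i j
    rw [Matrix.mul_apply]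
    simp only [hP, hV, Matrix.of_apply]
    rw [Fin.sum_univ_eq_sum_range (fun t => eL m k ↑i t * eV m k t ↑j) (m+1)]
    rw [lemA m k hm ↑i ↑j (Nat.lt_succ_iff.mp i.isLt) (Nat.lt_succ_iff.mp j.isLt)]
    simp [Matrix.one_apply, Fin.val_eq_val]
  have hRW : R * W = 1 := by
    ext i j
    rw [Matrix.mul_apply]
    simp only [hR, hW, Matrix.of_apply]
    rw [Fin.sum_univ_eq_sum_range (fun t => eR m k ↑i t * eW m k t ↑j) (m+1)]
    rw [lemB m k hm ↑i ↑j (Nat.lt_succ_iff.mp i.isLt) (Nat.lt_succ_iff.mp j.isLt)]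
    simp [Matrix.one_apply, Fin.val_eq_val]
  have hWR : W * R = 1 := mul_eq_one_comm.mp hRW
  have hCeq : V * (Dm * W) = N := by
    ext i j
    rw [Matrix.mul_apply]
    have hdw : ∀ t : Fin (m+1), (Dm * W) t j = dD m k ↑t * eW m k ↑t ↑j := by
      intro t
      rw [hDm, Matrix.diagonal_mul, hdiag t]
      simp [hW]
    simp only [hdw, hV, Matrix.of_apply]
    rw [Fin.sum_univ_eq_sum_range
      (fun t => eV m k ↑i t * (dD m k t * eW m k t ↑j)) (m+1)]
    rw [lemC m k hm ↑i ↑j (Nat.lt_succ_iff.mp i.isLt) (Nat.lt_succ_iff.mp j.isLt)]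
    rw [hN i j]
    simp [Fin.val_eq_val]
  refine ⟨P, R, ?_, ?_, ?_⟩
  · exact IsUnit.of_mul_eq_one V.det
      (by rw [← Matrix.det_mul, hPV, Matrix.det_one])
  · exact IsUnit.of_mul_eq_one W.det
      (by rw [← Matrix.det_mul, hRW, Matrix.det_one])
  · calc P * N * R = P * (V * (Dm * W)) * R := by rw [hCeq]
      _ = P * V * (Dm * (W * R)) := by simp only [Matrix.mul_assoc]
      _ = Dm := by rw [hPV, hWR, Matrix.one_mul, Matrix.mul_one]
end

section
/- For m ≥ 1 and k ≥ 2, the determinant of the block matrix of order mk+1 with (0,0)-entry 0, first row and first column otherwise all ones, and block-diagonal lower-right part consisting of m copies of M_k = -J_k - I_k, equals (-1)^{km} · k · (k+1)^{m-1} · m. -/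
open Matrix

theorem stmt_11 (m k : ℕ) (hm : 1 ≤ m) (hk : 2 ≤ k)
    (B : Matrix (Fin (m * k + 1)) (Fin (m * k + 1)) ℤ)
    (hB : ∀ i j : Fin (m * k + 1), B i j =
      if (i : ℕ) = 0 ∧ (j : ℕ) = 0 then 0
      else if (i : ℕ) = 0 ∨ (j : ℕ) = 0 then 1
      else if ((i : ℕ) - 1) / k = ((j : ℕ) - 1) / k then
        (if i = j then -2 else -1) else 0) :
    B.det = (-1 : ℤ) ^ (k * m) * (k : ℤ) * ((k : ℤ) + 1) ^ (m - 1) * (m : ℤ) := by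
  have hk0 : 0 < k := by omega
  have hk1 : ((k:ℚ)+1) ≠ 0 := by positivity
  set J : Matrix (Fin k) (Fin k) ℚ := Matrix.of (fun _ _ => 1) with hJ
  set Mq : Matrix (Fin k) (Fin k) ℚ := -J - 1 with hMq
  set Nq : Matrix (Fin k) (Fin k) ℚ := -1 + ((k:ℚ)+1)⁻¹ • J with hNq
  have hMN : Mq * Nq = 1 := by
    ext i j
    simp only [hMq, hNq, hJ, Matrix.mul_apply, Matrix.one_apply, Matrix.add_apply,
      Matrix.sub_apply, Matrix.neg_apply, Matrix.smul_apply, Matrix.of_apply, smul_eq_mul,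
      sub_mul, mul_add, neg_mul, one_mul, mul_one, Finset.sum_add_distrib,
      Finset.sum_sub_distrib, Finset.sum_neg_distrib]
    simp [Finset.sum_ite_eq, Finset.sum_ite_eq', Finset.card_univ, mul_comm]
    rcases eq_or_ne i j with h | h <;> simp [h] <;> field_simp <;> ring
  have hNM : Nq * Mq = 1 := by
    ext i j
    simp only [hMq, hNq, hJ, Matrix.mul_apply, Matrix.one_apply, Matrix.add_apply,
      Matrix.sub_apply, Matrix.neg_apply, Matrix.smul_apply, Matrix.of_apply, smul_eq_mul,
      sub_mul, mul_add, add_mul, mul_sub, neg_mul, one_mul, mul_one, Finset.sum_add_distrib,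
      Finset.sum_sub_distrib, Finset.sum_neg_distrib]
    simp [Finset.sum_ite_eq, Finset.sum_ite_eq', Finset.card_univ, mul_comm]
    rcases eq_or_ne i j with h | h <;> simp [h] <;> field_simp <;> ring
  set D : Matrix (Fin k × Fin m) (Fin k × Fin m) ℚ :=
    blockDiagonal (fun _ : Fin m => Mq) with hD
  set E : Matrix (Fin k × Fin m) (Fin k × Fin m) ℚ :=
    blockDiagonal (fun _ : Fin m => Nq) with hE
  have hDE : D * E = 1 := by
    rw [hD, hE, ← Matrix.blockDiagonal_mul]
    simp only [hMN]
    exact Matrix.blockDiagonal_one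
  have hED : E * D = 1 := by
    rw [hD, hE, ← Matrix.blockDiagonal_mul]
    simp only [hNM]
    exact Matrix.blockDiagonal_one
  haveI hInv : Invertible D := ⟨E, hED, hDE⟩
  have hinvOf : ⅟D = E := invOf_eq_right_inv hDE
  have hmk : 1 + m * k = m * k + 1 := by omega
  set e : (Fin 1 ⊕ (Fin k × Fin m)) ≃ Fin (m * k + 1) :=
    ((Equiv.refl (Fin 1)).sumCongr ((Equiv.prodComm (Fin k) (Fin m)).trans finProdFinEquiv)).trans
      (finSumFinEquiv.trans (finCongr hmk)) with he
  have hvalr : ∀ p : Fin k × Fin m, ((e (Sum.inr p)) : ℕ) = 1 + ((p.1 : ℕ) + k * p.2) := by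
    intro p
    simp [he, finSumFinEquiv, finProdFinEquiv, Fin.natAdd, add_comm]
  have hvall : ∀ i : Fin 1, ((e (Sum.inl i)) : ℕ) = 0 := by
    intro i
    simp [he, finSumFinEquiv, finProdFinEquiv, Fin.castAdd]
  set B' : Matrix (Fin (m * k + 1)) (Fin (m * k + 1)) ℚ := B.map (Int.cast : ℤ → ℚ) with hB'
  have hsub : B'.submatrix e e =
      fromBlocks 0 (Matrix.of fun _ _ => 1) (Matrix.of fun _ _ => 1) D := by
    ext i j
    rcases i with i | ⟨b, a⟩ <;> rcases j with j | ⟨d, c⟩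
    · simp [hB', Matrix.submatrix_apply, hB, hvall]
    · have h1 : ((e (Sum.inr (d, c))) : ℕ) = 1 + ((d : ℕ) + k * c) := hvalr _
      simp [hB', Matrix.submatrix_apply, hB, hvall, h1]
    · have h1 : ((e (Sum.inr (b, a))) : ℕ) = 1 + ((b : ℕ) + k * a) := hvalr _
      simp [hB', Matrix.submatrix_apply, hB, hvall, h1]
    · have h1 : ((e (Sum.inr (b, a))) : ℕ) = 1 + ((b : ℕ) + k * a) := hvalr _
      have h2 : ((e (Sum.inr (d, c))) : ℕ) = 1 + ((d : ℕ) + k * c) := hvalr _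
      have hb : (b : ℕ) < k := b.2
      have hdd : (d : ℕ) < k := d.2
      have hdiv1 : (1 + ((b : ℕ) + k * a) - 1) / k = a := by
        rw [Nat.add_sub_cancel_left, mul_comm, Nat.add_mul_div_right _ _ hk0,
          Nat.div_eq_of_lt hb, zero_add]
      have hdiv2 : (1 + ((d : ℕ) + k * c) - 1) / k = c := by
        rw [Nat.add_sub_cancel_left, mul_comm, Nat.add_mul_div_right _ _ hk0,
          Nat.div_eq_of_lt hdd, zero_add]
      have heq : (e (Sum.inr (b, a)) = e (Sum.inr (d, c))) ↔ ((b : ℕ) = d ∧ (a : ℕ) = c) := by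
        rw [Fin.ext_iff, h1, h2]
        constructor
        · intro h
          have h' := congrArg (fun x => (x - 1) / k) h
          rw [hdiv1, hdiv2] at h'
          have hka : k * (a : ℕ) = k * (c : ℕ) := by rw [h']
          omega
        · rintro ⟨h3, h4⟩
          rw [h3, h4]
      rw [Matrix.submatrix_apply, hB', Matrix.map_apply, hB]
      rw [Matrix.fromBlocks_apply₂₂, hD, Matrix.blockDiagonal_apply]
      simp only [h1, h2, hdiv1, hdiv2]
      rcases eq_or_ne a c with hac | hac
      · rcases eq_or_ne b d with hbd | hbd
        · subst hac; subst hbd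
          simp [hMq, hJ, Matrix.sub_apply, Matrix.neg_apply, Matrix.one_apply]
          norm_num
        · have hne : ¬ (e (Sum.inr (b, a)) = e (Sum.inr (d, c))) := by
            rw [heq]; exact fun h => hbd (Fin.ext h.1)
          subst hac
          simp [hne, hMq, hJ, Matrix.sub_apply, Matrix.neg_apply,
            Matrix.one_apply_ne hbd]
      · have hac' : ¬ ((a : ℕ) = (c : ℕ)) := fun h => hac (Fin.ext h)
        simp [hac', hac]
  have hdetM : Mq.det = (-1:ℚ)^k * ((k:ℚ)+1) := by
    have hM' : Mq = -(1 + Matrix.replicateCol (Fin 1) (fun _ => (1:ℚ)) *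
        Matrix.replicateRow (Fin 1) (fun _ => (1:ℚ))) := by
      ext i j
      simp [hMq, hJ, Matrix.mul_apply, Matrix.one_apply]
      ring
    rw [hM', Matrix.det_neg]
    erw [Matrix.det_one_add_replicateCol_mul_replicateRow (ι := Fin 1)]
    simp [Fintype.card_fin, dotProduct]
    ring
  have hdetD : D.det = ((-1:ℚ)^k * ((k:ℚ)+1))^m := by
    rw [hD, Matrix.det_blockDiagonal]
    simp [hdetM]
  have hBdet : ((B.det : ℤ) : ℚ) = B'.det := by
    rw [hB']
    exact RingHom.map_det (Int.castRingHom ℚ) B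
  have h1 : B'.det = D.det * Matrix.det ((0 : Matrix (Fin 1) (Fin 1) ℚ) -
      ((Matrix.of (fun _ _ => 1)) : Matrix (Fin 1) (Fin k × Fin m) ℚ) * ⅟D *
      ((Matrix.of (fun _ _ => 1)) : Matrix (Fin k × Fin m) (Fin 1) ℚ)) := by
    rw [← Matrix.det_submatrix_equiv_self e B', hsub, Matrix.det_fromBlocks₂₂]
  rw [hinvOf] at h1
  have hsum : (((Matrix.of (fun _ _ => (1:ℚ))) : Matrix (Fin 1) (Fin k × Fin m) ℚ) * E *
      ((Matrix.of (fun _ _ => (1:ℚ))) : Matrix (Fin k × Fin m) (Fin 1) ℚ)) 0 0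
      = m * (-(k:ℚ) + k*k*((k:ℚ)+1)⁻¹) := by
    simp [Matrix.mul_apply, hE, Matrix.blockDiagonal_apply, Fintype.sum_prod_type, hNq, hJ,
      Matrix.one_apply, Finset.sum_ite_eq, Finset.sum_ite_eq', Finset.card_univ, mul_comm,
      Finset.sum_add_distrib]
    ring
  have h2 : Matrix.det ((0 : Matrix (Fin 1) (Fin 1) ℚ) -
      ((Matrix.of (fun _ _ => 1)) : Matrix (Fin 1) (Fin k × Fin m) ℚ) * E *
      ((Matrix.of (fun _ _ => 1)) : Matrix (Fin k × Fin m) (Fin 1) ℚ)) =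
      -(m * (-(k:ℚ) + k*k*((k:ℚ)+1)⁻¹)) := by
    rw [Matrix.det_fin_one, Matrix.sub_apply, hsum, Matrix.zero_apply, zero_sub]
  obtain ⟨m', rfl⟩ : ∃ m', m = m' + 1 := ⟨m - 1, by omega⟩
  have hq : ((B.det : ℤ) : ℚ) =
      (-1:ℚ)^(k*(m'+1)) * (k:ℚ) * ((k:ℚ)+1)^m' * ((m'+1 : ℕ) : ℚ) := by
    rw [hBdet, h1, h2, hdetD, pow_mul, mul_pow]
    field_simp
    ring
  have hgoal : ((m' + 1) : ℕ) - 1 = m' := by omega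
  rw [hgoal]
  exact_mod_cast hq
end

section
/- For a tree T on n+1 vertices (n ≥ 1), the determinant of its distance matrix D(T) equals (-1)^n · n · 2^{n-1}. In particular, the determinant depends only on the number of vertices, not on the structure of the tree. -/
/-!
Carry a constant shift along: for a tree on `n + 1` vertices,
`det (D + t J) = (-2)^n (n/2 + t)`, where `J` is the all-ones matrix.
Let `v` be a leaf attached to `u`. Subtracting row and column `u` from row and column `v` turns
`D + t J` into the matrix `D' + t J` of the tree without `v`, bordered by ones with corner `-2`;
the Schur complement of that corner is `D' + (t + 1/2) J`, so the claim follows by induction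
and `t = 0` gives the theorem.
-/

namespace Matrix

variable {ι K : Type*} [Fintype ι] [DecidableEq ι] [Field K]

theorem det_fromBlocks_ones (B : Matrix ι ι K) {c : K} (hc : c ≠ 0) :
    (fromBlocks B (of fun _ _ => 1) (of fun _ _ => 1) (of fun _ _ => c) :
      Matrix (ι ⊕ Unit) (ι ⊕ Unit) K).det = c * (B - of fun _ _ => c⁻¹).det := by
  let C : Matrix Unit Unit K := of fun _ _ => c
  let _ : Invertible C :=
    ⟨of fun _ _ => c⁻¹, by ext; simp [C, mul_apply, hc], by ext; simp [C, mul_apply, hc]⟩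
  rw [det_fromBlocks₂₂ _ _ _ C]
  congr 1
  · simp [C]
  · congr 1
    ext i j
    simp [mul_apply, show ⅟C = of fun _ _ => c⁻¹ from rfl]

/-- The index `inr ()` plays the role of a leaf attached to `k`. -/
theorem det_fromBlocks_pendant (A : Matrix ι ι K) {k : ι} (hk : A k k = 0) (t : K) :
    (fromBlocks (of fun i j => A i j + t) (of fun i _ => A i k + 1 + t)
      (of fun _ j => A k j + 1 + t) (of fun _ _ => t) : Matrix (ι ⊕ Unit) (ι ⊕ Unit) K).det =
    (fromBlocks (of fun i j => A i j + t) (of fun _ _ => 1) (of fun _ _ => 1)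
      (of fun _ _ => -2) : Matrix (ι ⊕ Unit) (ι ⊕ Unit) K).det := by
  set M : Matrix (ι ⊕ Unit) (ι ⊕ Unit) K := fromBlocks (of fun i j => A i j + t)
    (of fun i _ => A i k + 1 + t) (of fun _ j => A k j + 1 + t) (of fun _ _ => t)
  have hne : (Sum.inr () : ι ⊕ Unit) ≠ Sum.inl k := Sum.inr_ne_inl
  set M₁ := updateRow M (Sum.inr ()) (M (Sum.inr ()) + (-1 : K) • M (Sum.inl k))
  rw [← det_updateRow_add_smul_self M hne, ← det_updateCol_add_smul_self M₁ hne (-1)]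
  congr 1
  ext (i | _) (j | _) <;> simp [M₁, M, updateRow_apply, hk]
  norm_num

end Matrix

namespace SimpleGraph

variable {V : Type*} {G : SimpleGraph V} {u v w : V}

theorem Reachable.dist_eq_dist_add_one_of_neighborSet_subsingleton (hr : G.Reachable v w)
    (hvw : v ≠ w) (hv : (G.neighborSet v).Subsingleton) (huv : G.Adj v u) :
    G.dist v w = G.dist u w + 1 := by
  apply le_antisymm
  · have := huv.reachable.dist_triangle_left w
    rw [dist_eq_one_iff_adj.mpr huv] at this
    omega
  · obtain ⟨p, hp⟩ := hr.exists_walk_length_eq_dist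
    cases p with
    | nil => exact absurd rfl hvw
    | cons hvx q =>
      obtain rfl := hv hvx huv
      rw [← hp, Walk.length_cons]
      exact Nat.add_le_add_right (dist_le q) 1

theorem dist_induce_compl_singleton (hv : (G.neighborSet v).Subsingleton)
    (x y : ({v}ᶜ : Set V)) : (G.induce {v}ᶜ).dist x y = G.dist x y := by
  by_cases hr : G.Reachable x y
  · obtain ⟨p, hp, hlen⟩ := hr.exists_path_of_dist
    have hpv : ∀ z ∈ p.support, z ∈ ({v}ᶜ : Set V) := fun z hz hzv =>
      hp.isTrail.not_mem_support_of_subsingleton_neighborSet (Ne.symm x.2) (Ne.symm y.2) hv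
        (Set.mem_singleton_iff.mp hzv ▸ hz)
    let q := p.induce {v}ᶜ hpv
    have hq : q.length = p.length := by
      rw [← Walk.length_map (Embedding.induce _).toHom q, Walk.map_induce]
      rfl
    obtain ⟨r, hr⟩ := q.reachable.exists_walk_length_eq_dist
    apply le_antisymm
    · exact (dist_le q).trans (hq.trans hlen).le
    · exact (dist_le (r.map (Embedding.induce _).toHom)).trans (Walk.length_map _ r ▸ hr).le
  · have hr' : ¬(G.induce {v}ᶜ).Reachable x y := fun h => hr (h.map (Embedding.induce _).toHom)
    rw [dist_eq_zero_of_not_reachable hr, dist_eq_zero_of_not_reachable hr']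

open Matrix

theorem Connected.det_dist_add_const_eq_of_neighborSet_subsingleton {K : Type*} [Field K]
    (h2 : (2 : K) ≠ 0) [Fintype V] [DecidableEq V] (hG : G.Connected)
    (hv : (G.neighborSet v).Subsingleton) (huv : G.Adj v u) (t : K) :
    (of fun x y => (G.dist x y : K) + t).det =
      -2 * (of fun x y : ({v}ᶜ : Set V) => ((G.induce {v}ᶜ).dist x y : K) + (t + 1 / 2)).det := by
  let k : ({v}ᶜ : Set V) := ⟨u, huv.ne'⟩
  have hdist (x : ({v}ᶜ : Set V)) : G.dist v x = (G.induce {v}ᶜ).dist k x + 1 := by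
    rw [dist_induce_compl_singleton hv,
      (hG.preconnected v x).dist_eq_dist_add_one_of_neighborSet_subsingleton (Ne.symm x.2) hv huv]
  let e : ({v}ᶜ : Set V) ⊕ Unit ≃ V :=
    (Equiv.optionEquivSumPUnit _).symm.trans (Equiv.optionSubtypeNe v)
  have he_inl (x) : e (.inl x) = x := rfl
  have he_inr (x) : e (.inr x) = v := rfl
  let A : Matrix ({v}ᶜ : Set V) ({v}ᶜ : Set V) K := of fun x y => ((G.induce {v}ᶜ).dist x y : K)
  have hblocks : (of fun x y => (G.dist x y : K) + t).submatrix e e =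
      fromBlocks (of fun i j => A i j + t) (of fun i _ => A i k + 1 + t)
        (of fun _ j => A k j + 1 + t) (of fun _ _ => t) := by
    ext (x | _) (y | _) <;>
      simp [A, he_inl, he_inr, dist_induce_compl_singleton hv, hdist, dist_comm]
  have hshift : (of fun i j => A i j + t) - (of fun _ _ => (-2)⁻¹) =
      of fun x y => ((G.induce {v}ᶜ).dist x y : K) + (t + 1 / 2) := by
    ext
    simp only [A, Matrix.sub_apply, of_apply, inv_neg]
    ring
  rw [← det_submatrix_equiv_self e, hblocks, det_fromBlocks_pendant A (by simp [A]),
    det_fromBlocks_ones _ (by simpa using h2), hshift]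

theorem IsTree.det_dist_add_const {K : Type*} [Field K] (h2 : (2 : K) ≠ 0) (n : ℕ)
    [Fintype V] [DecidableEq V] (hG : G.IsTree) (hV : Fintype.card V = n + 1) (t : K) :
    (of fun x y => (G.dist x y : K) + t).det = (-2) ^ n * (n / 2 + t) := by
  induction n generalizing V t with
  | zero =>
    have : Unique V := (Fintype.card_eq_one_iff_nonempty_unique.mp hV).some
    simp [det_unique]
  | succ n ih =>
    have : Nontrivial V := Fintype.one_lt_card_iff_nontrivial.mp (by omega)
    classical
    obtain ⟨v, hv⟩ := hG.exists_vert_degree_one_of_nontrivial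
    obtain ⟨u, huv, hu⟩ := degree_eq_one_iff_existsUnique_adj.mp hv
    have hleaf : (G.neighborSet v).Subsingleton := fun a ha b hb => (hu a ha).trans (hu b hb).symm
    have hH : (G.induce {v}ᶜ).IsTree :=
      ⟨hG.connected.induce_compl_singleton_of_degree_eq_one hv, hG.isAcyclic.induce _⟩
    have hcard : Fintype.card ({v}ᶜ : Set V) = n + 1 := by
      rw [Fintype.card_compl_set]
      simp [hV]
    rw [hG.connected.det_dist_add_const_eq_of_neighborSet_subsingleton h2 hleaf huv,
      ih hH hcard]
    push_cast
    ring

end SimpleGraph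

theorem stmt_14_general (n : ℕ) (G : SimpleGraph (Fin (n+1)))
    (hG : G.Connected) (hac : G.IsAcyclic) :
    Matrix.det (Matrix.of fun i j => (G.dist i j : ℤ)) =
      (-1 : ℤ) ^ n * (n : ℤ) * 2 ^ (n - 1) := by
  have h := SimpleGraph.IsTree.det_dist_add_const (K := ℚ) two_ne_zero n ⟨hG, hac⟩
    (Fintype.card_fin _) 0
  simp only [add_zero] at h
  apply Int.cast_injective (α := ℚ)
  rw [Int.cast_det]
  refine h.trans ?_
  rcases n with _ | n
  · simp
  · push_cast
    rw [neg_pow (2 : ℚ)]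
    ring

theorem stmt_14 (n : ℕ) (hn : 1 ≤ n) (G : SimpleGraph (Fin (n+1)))
    (hG : G.Connected) (hac : G.IsAcyclic) :
    Matrix.det (Matrix.of fun i j => (G.dist i j : ℤ)) =
      (-1 : ℤ) ^ n * (n : ℤ) * 2 ^ (n - 1) :=
  stmt_14_general n G hG hac
end

section
/- For any tree T on n+1 vertices with n ≥ 2, the Smith normal form of the distance matrix D(T) is I_2 ⊕ 2·I_{n-2} ⊕ [2n], i.e., the invariant factors are 1, 1, 2 (with multiplicity n-2), and 2n. -/
set_option linter.unusedSectionVars false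
set_option maxHeartbeats 1000000
open SimpleGraph Matrix Finset
variable {V : Type*} [Fintype V] [DecidableEq V] {G : SimpleGraph V}

lemma exists_parent (hG : G.Connected) {r x : V} (hx : x ≠ r) :
    ∃ w, G.Adj x w ∧ G.dist r w + 1 = G.dist r x := by
  obtain ⟨p, hp, hpl⟩ := hG.exists_path_of_dist x r
  obtain ⟨w, ha, q, rfl⟩ := Walk.exists_eq_cons_of_ne hx p
  refine ⟨w, ha, ?_⟩
  have h1 : G.dist w r ≤ q.length := SimpleGraph.dist_le q
  have h2 : G.dist r x ≤ G.dist r w + 1 := by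
    have h3 : G.dist w x = 1 := SimpleGraph.dist_eq_one_iff_adj.mpr ha.symm
    have := hG.dist_triangle (u := r) (v := w) (w := x); omega
  have h3 : (Walk.cons ha q).length = q.length + 1 := Walk.length_cons _ _
  have h4 : G.dist r w = G.dist w r := SimpleGraph.dist_comm
  have h5 : G.dist r x = G.dist x r := SimpleGraph.dist_comm
  omega
variable {V : Type*} [Fintype V] [DecidableEq V] {G : SimpleGraph V}

lemma isPath_concat' {u v w : V} {p : G.Walk u v} (hp : p.IsPath) (h : G.Adj v w)
    (hw : w ∉ p.support) : (p.concat h).IsPath := by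
  have h1 : (Walk.cons h.symm p.reverse).IsPath :=
    hp.reverse.cons (by simpa using hw)
  have h2 : (Walk.cons h.symm p.reverse).reverse = p.concat h := by
    rw [Walk.reverse_cons, Walk.reverse_reverse]
    rfl
  rw [← h2]
  exact h1.reverse

lemma dist_step (hG : G.Connected) (hac : G.IsAcyclic) {u v : V} (h : G.Adj u v) (z : V) :
    G.dist z u = G.dist z v + 1 ∨ G.dist z v = G.dist z u + 1 := by
  have hd1 : G.dist v u = 1 := SimpleGraph.dist_eq_one_iff_adj.mpr h.symm
  have hd2 : G.dist u v = 1 := SimpleGraph.dist_eq_one_iff_adj.mpr h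
  have h1 : G.dist z u ≤ G.dist z v + 1 := by
    have := hG.dist_triangle (u := z) (v := v) (w := u); omega
  have h2 : G.dist z v ≤ G.dist z u + 1 := by
    have := hG.dist_triangle (u := z) (v := u) (w := v); omega
  have hne : G.dist z u ≠ G.dist z v := by
    intro he
    obtain ⟨p, hp, hpl⟩ := hG.exists_path_of_dist z u
    obtain ⟨q, hq, hql⟩ := hG.exists_path_of_dist z v
    have hu : u ∉ q.support := by
      intro hu
      have h3 : (q.takeUntil u hu).length + (q.dropUntil u hu).length = q.length := by
        rw [← Walk.length_append, Walk.take_spec]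
      have h4 : G.dist z u ≤ (q.takeUntil u hu).length := SimpleGraph.dist_le _
      have h5 : G.dist u v ≤ (q.dropUntil u hu).length := SimpleGraph.dist_le _
      omega
    have hq' : (q.concat h.symm).IsPath := isPath_concat' hq h.symm hu
    have hpq : (⟨p, hp⟩ : G.Path z u) = ⟨q.concat h.symm, hq'⟩ := hac.path_unique _ _
    have hlen : p.length = (q.concat h.symm).length := by rw [Subtype.mk.injEq] at hpq; rw [hpq]
    rw [Walk.length_concat] at hlen
    omega
  omega

lemma no_cross (hG : G.Connected) (hac : G.IsAcyclic) {x x' y y' : V}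
    (hx : G.Adj x x') (hy : G.Adj y y') (hne : ¬(x = y' ∧ x' = y))
    (c1 : G.dist x y = G.dist x' y + 1) (c2 : G.dist x' y' = G.dist x y' + 1) : False := by
  set b := G.dist x y' with hb
  have e1 : G.dist x' y' = b + 1 := c2
  have t1 : G.dist x' y' ≤ G.dist x' y + 1 := by
    have h1 : G.dist y y' = 1 := SimpleGraph.dist_eq_one_iff_adj.mpr hy
    have := hG.dist_triangle (u := x') (v := y) (w := y'); omega
  have t2 : G.dist x y ≤ b + 1 := by
    have h1 : G.dist y' y = 1 := SimpleGraph.dist_eq_one_iff_adj.mpr hy.symm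
    have := hG.dist_triangle (u := x) (v := y') (w := y); omega
  have e2 : G.dist x' y = b := by omega
  have e3 : G.dist x y = b + 1 := by omega
  obtain ⟨q, hq, hql⟩ := hG.exists_path_of_dist x y'
  have hyq : y ∉ q.support := by
    intro hu
    have h3 : (q.takeUntil y hu).length + (q.dropUntil y hu).length = q.length := by
      rw [← Walk.length_append, Walk.take_spec]
    have h4 : G.dist x y ≤ (q.takeUntil y hu).length := SimpleGraph.dist_le _
    have h5 : G.dist y y' ≤ (q.dropUntil y hu).length := SimpleGraph.dist_le _
    have h6 : G.dist y y' = 1 := SimpleGraph.dist_eq_one_iff_adj.mpr hy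
    omega
  have hxq : x' ∉ q.support := by
    intro hu
    have h3 : (q.takeUntil x' hu).length + (q.dropUntil x' hu).length = q.length := by
      rw [← Walk.length_append, Walk.take_spec]
    have h4 : G.dist x x' ≤ (q.takeUntil x' hu).length := SimpleGraph.dist_le _
    have h5 : G.dist x' y' ≤ (q.dropUntil x' hu).length := SimpleGraph.dist_le _
    omega
  have hxy : x' ≠ y := by
    intro hxy
    subst hxy
    have hb0 : G.dist x' x' = 0 := SimpleGraph.dist_self
    exact hne ⟨(hG.dist_eq_zero_iff).mp (by omega), rfl⟩
  have hW : ((Walk.cons hx.symm q).concat hy.symm).IsPath := by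
    apply isPath_concat'
    · exact hq.cons hxq
    · simp [hyq, hxy.symm]
  obtain ⟨r, hr, hrl⟩ := hG.exists_path_of_dist x' y
  have hpq : (⟨r, hr⟩ : G.Path x' y) = ⟨(Walk.cons hx.symm q).concat hy.symm, hW⟩ :=
    hac.path_unique _ _
  have hlen : r.length = ((Walk.cons hx.symm q).concat hy.symm).length := by
    rw [Subtype.mk.injEq] at hpq; rw [hpq]
  rw [Walk.length_concat, Walk.length_cons] at hlen
  omega

lemma quad (hG : G.Connected) (hac : G.IsAcyclic) {r x y px py : V}
    (hxp : G.Adj x px) (hyp : G.Adj y py)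
    (hdx : G.dist r px + 1 = G.dist r x) (hdy : G.dist r py + 1 = G.dist r y)
    (hxy : x ≠ y) :
    G.dist x y + G.dist px py = G.dist px y + G.dist x py := by
  have s1 := dist_step hG hac hxp y
  have s2 := dist_step hG hac hxp py
  have s3 := dist_step hG hac hyp x
  have s4 := dist_step hG hac hyp px
  have hne1 : ¬(x = py ∧ px = y) := by rintro ⟨rfl, rfl⟩; omega
  have nc1 : ¬(G.dist x y = G.dist px y + 1 ∧ G.dist px py = G.dist x py + 1) := by
    rintro ⟨c1, c2⟩; exact no_cross hG hac hxp hyp hne1 c1 c2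
  have nc2 : ¬(G.dist px y = G.dist x y + 1 ∧ G.dist x py = G.dist px py + 1) := by
    rintro ⟨c1, c2⟩
    exact no_cross hG hac hxp.symm hyp (fun hh => hxy hh.2) c1 c2
  have e1 : G.dist y x = G.dist x y := SimpleGraph.dist_comm
  have e2 : G.dist y px = G.dist px y := SimpleGraph.dist_comm
  have e3 : G.dist py x = G.dist x py := SimpleGraph.dist_comm
  have e4 : G.dist py px = G.dist px py := SimpleGraph.dist_comm
  omega
open Matrix Finset

namespace TreeSNF

section helpers
variable {m : Type*} [Fintype m] [DecidableEq m]

lemma rowop_mul (p : m → Prop) [DecidablePred p] (f : m → m) (s : ℤ)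
    (A : Matrix m m ℤ) (x y : m) :
    ((Matrix.of fun i k => if p i ∧ k = f i then s else 0) * A) x y
      = if p x then s * A (f x) y else 0 := by
  rw [Matrix.mul_apply]
  by_cases h : p x <;> simp [h, ite_mul, Finset.sum_ite_eq']

lemma colop_mul (p : m → Prop) [DecidablePred p] (f : m → m) (s : ℤ)
    (A : Matrix m m ℤ) (x y : m) :
    (A * (Matrix.of fun k j => if p j ∧ k = f j then s else 0)) x y
      = if p y then A x (f y) * s else 0 := by
  rw [Matrix.mul_apply]
  by_cases h : p y <;> simp [h, mul_ite, Finset.sum_ite_eq]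

lemma mul_rowop_transpose (p : m → Prop) [DecidablePred p] (f : m → m) (s : ℤ)
    (A : Matrix m m ℤ) (x y : m) :
    (A * (Matrix.of fun i k => if p i ∧ k = f i then s else 0)ᵀ) x y
      = if p y then A x (f y) * s else 0 := by
  rw [Matrix.mul_apply]
  by_cases h : p y <;> simp [Matrix.transpose_apply, h, mul_ite, Finset.sum_ite_eq]

lemma denserow_mul (p : m → Prop) [DecidablePred p] (c : m) (s : ℤ)
    (A : Matrix m m ℤ) (x y : m) :
    ((Matrix.of fun i k => if i = c ∧ p k then s else 0) * A) x y
      = if x = c then ∑ k, (if p k then s * A k y else 0) else 0 := by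
  rw [Matrix.mul_apply]
  by_cases h : x = c <;> simp [h, ite_mul]

lemma mul_densecol (p : m → Prop) [DecidablePred p] (c : m) (s : ℤ)
    (A : Matrix m m ℤ) (x y : m) :
    (A * (Matrix.of fun k j => if j = c ∧ p k then s else 0)) x y
      = if y = c then ∑ k, (if p k then A x k * s else 0) else 0 := by
  rw [Matrix.mul_apply]
  by_cases h : y = c <;> simp [h, mul_ite]

lemma mul_permcol (σ : Equiv.Perm m) (A : Matrix m m ℤ) (x y : m) :
    (A * (Matrix.of fun k j => if k = σ j then (1:ℤ) else 0)) x y = A x (σ y) := by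
  rw [Matrix.mul_apply]
  simp [mul_ite, Finset.sum_ite_eq]

lemma one_add_mul_one_sub {R : Type*} [Ring R] {S : R} (h : S * S = 0) :
    (1 + S) * (1 - S) = 1 := by
  have e : (1 + S) * (1 - S) = 1 - S * S := by noncomm_ring
  rw [e, h, sub_zero]

end helpers

lemma sum_interval_const (n : ℕ) (hn : 2 ≤ n) (c : ℤ) :
    (∑ k : Fin (n+1), if 2 ≤ (k:ℕ) ∧ (k:ℕ) < n then c else 0) = ((n:ℤ) - 2) * c := by
  rw [Fin.sum_univ_eq_sum_range (fun k => if 2 ≤ k ∧ k < n then c else 0)]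
  rw [← Finset.sum_filter]
  have he : (Finset.range (n+1)).filter (fun k => 2 ≤ k ∧ k < n) = Finset.Ico 2 n := by
    ext k; simp [Finset.mem_Ico]; omega
  rw [he, Finset.sum_const, Nat.card_Ico, nsmul_eq_mul]
  have hc : ((n - 2 : ℕ) : ℤ) = (n:ℤ) - 2 := by omega
  rw [hc]

variable (n : ℕ)

/-- fixed border matrix -/
def M : Matrix (Fin (n+1)) (Fin (n+1)) ℤ :=
  Matrix.of fun i j =>
    if (i:ℕ) = 0 then (if (j:ℕ) = 0 then 0 else 1)
    else (if (j:ℕ) = 0 then 1 else if (i:ℕ) = (j:ℕ) then -2 else 0)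

def X1 : Matrix (Fin (n+1)) (Fin (n+1)) ℤ :=
  Matrix.of fun i j =>
    if (i:ℕ) = 0 then (if (j:ℕ) = 0 then 0 else 1)
    else if (i:ℕ) = 1 then (if (j:ℕ) = 0 then 1 else if (j:ℕ) = 1 then 0 else 2)
    else (if (j:ℕ) = 0 then 1 else if (i:ℕ) = (j:ℕ) then -2 else 0)

def X2 : Matrix (Fin (n+1)) (Fin (n+1)) ℤ :=
  Matrix.of fun i j =>
    if (i:ℕ) = 0 then (if (j:ℕ) = 0 then 0 else 1)
    else if (i:ℕ) = 1 then (if (j:ℕ) = 0 then 1 else if (j:ℕ) = 1 then 0 else 2)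
    else (if (j:ℕ) ≤ 1 then 0 else if (i:ℕ) = (j:ℕ) then -4 else -2)

def X3 : Matrix (Fin (n+1)) (Fin (n+1)) ℤ :=
  Matrix.of fun i j =>
    if (i:ℕ) = 0 then (if (j:ℕ) = 0 then 0 else 1)
    else if (i:ℕ) = 1 then (if (j:ℕ) = 0 then 1 else if (j:ℕ) = 1 then 0 else 2)
    else if (i:ℕ) < n then (if (i:ℕ) = (j:ℕ) then -2 else if (j:ℕ) = n then 2 else 0)
    else (if (j:ℕ) ≤ 1 then 0 else if (j:ℕ) = n then -4 else -2)

def X4 : Matrix (Fin (n+1)) (Fin (n+1)) ℤ :=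
  Matrix.of fun i j =>
    if (i:ℕ) = 0 then (if (j:ℕ) = 0 then 0 else 1)
    else if (i:ℕ) = 1 then (if (j:ℕ) = 0 then 1 else if (j:ℕ) = 1 then 0 else 2)
    else if (i:ℕ) < n then (if (i:ℕ) = (j:ℕ) then -2 else if (j:ℕ) = n then 2 else 0)
    else (if (j:ℕ) = n then -2*(n:ℤ) else 0)

def X5 : Matrix (Fin (n+1)) (Fin (n+1)) ℤ :=
  Matrix.of fun i j =>
    if (i:ℕ) = 0 then (if (j:ℕ) = 0 then 0 else 1)
    else if (i:ℕ) = 1 then (if (j:ℕ) = 0 then 1 else if (j:ℕ) = 1 then 0 else 2)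
    else if (i:ℕ) < n then (if (i:ℕ) = (j:ℕ) then 2 else if (j:ℕ) = n then -2 else 0)
    else (if (j:ℕ) = n then 2*(n:ℤ) else 0)

def X6 : Matrix (Fin (n+1)) (Fin (n+1)) ℤ :=
  Matrix.of fun i j =>
    if (i:ℕ) = 0 then (if (j:ℕ) = 1 then 0 else 1)
    else if (i:ℕ) = 1 then (if (j:ℕ) = 1 then 1 else if (j:ℕ) = 0 then 0 else 2)
    else if (i:ℕ) < n then (if (i:ℕ) = (j:ℕ) then 2 else if (j:ℕ) = n then -2 else 0)
    else (if (j:ℕ) = n then 2*(n:ℤ) else 0)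

def X7 : Matrix (Fin (n+1)) (Fin (n+1)) ℤ :=
  Matrix.of fun i j =>
    if (i:ℕ) = 0 then (if (j:ℕ) = 0 then 1 else 0)
    else if (i:ℕ) = 1 then (if (j:ℕ) = 1 then 1 else if (j:ℕ) = 0 then 0 else 2)
    else if (i:ℕ) < n then (if (i:ℕ) = (j:ℕ) then 2 else if (j:ℕ) = n then -2 else 0)
    else (if (j:ℕ) = n then 2*(n:ℤ) else 0)

def X8 : Matrix (Fin (n+1)) (Fin (n+1)) ℤ :=
  Matrix.of fun i j =>
    if (i:ℕ) = 0 then (if (j:ℕ) = 0 then 1 else 0)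
    else if (i:ℕ) = 1 then (if (j:ℕ) = 1 then 1 else 0)
    else if (i:ℕ) < n then (if (i:ℕ) = (j:ℕ) then 2 else if (j:ℕ) = n then -2 else 0)
    else (if (j:ℕ) = n then 2*(n:ℤ) else 0)

def Tm : Matrix (Fin (n+1)) (Fin (n+1)) ℤ :=
  Matrix.diagonal (fun i : Fin (n+1) =>
    if (i : ℕ) < 2 then (1 : ℤ) else if (i : ℕ) < n then 2 else 2 * n)

def Sa : Matrix (Fin (n+1)) (Fin (n+1)) ℤ :=
  Matrix.of fun i k => if (i:ℕ) = 1 ∧ k = (fun _ => (0 : Fin (n+1))) i then (2:ℤ) else 0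
def Sb : Matrix (Fin (n+1)) (Fin (n+1)) ℤ :=
  Matrix.of fun i k => if 2 ≤ (i:ℕ) ∧ k = (fun _ => (1 : Fin (n+1))) i then (-1:ℤ) else 0
def Sc : Matrix (Fin (n+1)) (Fin (n+1)) ℤ :=
  Matrix.of fun i k => if (2 ≤ (i:ℕ) ∧ (i:ℕ) < n) ∧ k = (fun _ => Fin.last n) i then (-1:ℤ) else 0
def Sd : Matrix (Fin (n+1)) (Fin (n+1)) ℤ :=
  Matrix.of fun i k => if i = Fin.last n ∧ (2 ≤ (k:ℕ) ∧ (k:ℕ) < n) then (-1:ℤ) else 0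
def Pe : Matrix (Fin (n+1)) (Fin (n+1)) ℤ :=
  Matrix.diagonal (fun i => if (i:ℕ) ≤ 1 then (1:ℤ) else -1)
def Qa : Matrix (Fin (n+1)) (Fin (n+1)) ℤ :=
  Matrix.of fun k j => if k = (Equiv.swap (0 : Fin (n+1)) 1) j then (1:ℤ) else 0
def Sqb : Matrix (Fin (n+1)) (Fin (n+1)) ℤ :=
  Matrix.of fun k j => if 2 ≤ (j:ℕ) ∧ k = (fun _ => (0 : Fin (n+1))) j then (-1:ℤ) else 0
def Sqc : Matrix (Fin (n+1)) (Fin (n+1)) ℤ :=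
  Matrix.of fun k j => if 2 ≤ (j:ℕ) ∧ k = (fun _ => (1 : Fin (n+1))) j then (-2:ℤ) else 0
def Sqd : Matrix (Fin (n+1)) (Fin (n+1)) ℤ :=
  Matrix.of fun k j => if j = Fin.last n ∧ (2 ≤ (k:ℕ) ∧ (k:ℕ) < n) then (1:ℤ) else 0

variable {n}

lemma v1 (hn : 2 ≤ n) : ((1 : Fin (n+1)) : ℕ) = 1 := by
  rw [Fin.val_one', Nat.mod_eq_of_lt (by omega)]

lemma step1 (hn : 2 ≤ n) : (1 + Sa n) * M n = X1 n := by
  ext x y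
  rw [Sa, add_mul, one_mul, Matrix.add_apply, rowop_mul]
  simp only [M, X1, Matrix.of_apply, v1 hn, show ((0 : Fin (n+1)) : ℕ) = 0 from rfl]
  split_ifs <;> first | contradiction | omega

lemma step2 (hn : 2 ≤ n) : (1 + Sb n) * X1 n = X2 n := by
  ext x y
  rw [Sb, add_mul, one_mul, Matrix.add_apply, rowop_mul]
  simp only [X1, X2, Matrix.of_apply, v1 hn]
  split_ifs <;> first | contradiction | omega

lemma step3 (hn : 2 ≤ n) : (1 + Sc n) * X2 n = X3 n := by
  ext x y
  rw [Sc, add_mul, one_mul, Matrix.add_apply, rowop_mul]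
  simp only [X2, X3, Matrix.of_apply, v1 hn, Fin.val_last]
  split_ifs <;> first | contradiction | omega

lemma step4 (hn : 2 ≤ n) : (1 + Sd n) * X3 n = X4 n := by
  have key : ∀ y : Fin (n+1),
      (∑ k : Fin (n+1), if 2 ≤ (k:ℕ) ∧ (k:ℕ) < n then (-1) * X3 n k y else 0)
        = (if (y:ℕ) ≤ 1 then 0 else if (y:ℕ) < n then 2 else -2*(n:ℤ) + 4) := by
    intro y
    by_cases hy1 : (y:ℕ) ≤ 1
    · rw [if_pos hy1]
      apply Finset.sum_eq_zero
      intro k _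
      simp only [X3, Matrix.of_apply, v1 hn]
      split_ifs <;> first | contradiction | omega
    · rw [if_neg hy1]
      by_cases hyn : (y:ℕ) < n
      · rw [if_pos hyn]
        have hpt : ∀ k : Fin (n+1),
            (if 2 ≤ (k:ℕ) ∧ (k:ℕ) < n then (-1) * X3 n k y else 0)
              = if k = y then 2 else 0 := by
          intro k
          have hval : k = y ↔ (k:ℕ) = (y:ℕ) := Fin.ext_iff
          simp only [X3, Matrix.of_apply, v1 hn, hval]
          split_ifs <;> first | contradiction | omega
        rw [Finset.sum_congr rfl (fun k _ => hpt k), Finset.sum_ite_eq']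
        simp
      · rw [if_neg hyn]
        have hpt : ∀ k : Fin (n+1),
            (if 2 ≤ (k:ℕ) ∧ (k:ℕ) < n then (-1) * X3 n k y else 0)
              = if 2 ≤ (k:ℕ) ∧ (k:ℕ) < n then (-2) else 0 := by
          intro k
          simp only [X3, Matrix.of_apply, v1 hn]
          split_ifs <;> first | contradiction | omega
        rw [Finset.sum_congr rfl (fun k _ => hpt k), sum_interval_const n hn (-2)]
        ring
  ext x y
  rw [Sd, add_mul, one_mul, Matrix.add_apply, denserow_mul]
  by_cases hx : x = Fin.last n
  · rw [if_pos hx, key y, hx]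
    simp only [X3, X4, Matrix.of_apply, Fin.val_last]
    split_ifs <;> first | contradiction | omega
  · rw [if_neg hx, add_zero]
    have hx' : (x:ℕ) ≠ n := by
      intro h; exact hx (Fin.ext (by rw [h, Fin.val_last]))
    simp only [X3, X4, Matrix.of_apply]
    split_ifs <;> first | contradiction | omega

lemma step5 (hn : 2 ≤ n) : Pe n * X4 n = X5 n := by
  ext x y
  rw [Pe, Matrix.diagonal_mul]
  simp only [X4, X5, Matrix.of_apply]
  split_ifs <;> first | contradiction | omega

lemma step6 (hn : 2 ≤ n) : X5 n * Qa n = X6 n := by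
  ext x y
  rw [Qa, mul_permcol]
  have h01 : (0 : Fin (n+1)) ≠ 1 := by
    intro h
    have h2 := congrArg Fin.val h
    rw [v1 hn, show ((0 : Fin (n+1)) : ℕ) = 0 from rfl] at h2
    exact absurd h2 (by omega)
  by_cases hy0 : y = 0
  · rw [hy0, Equiv.swap_apply_left]
    simp only [X5, X6, Matrix.of_apply, v1 hn, show ((0 : Fin (n+1)) : ℕ) = 0 from rfl]
    split_ifs <;> first | contradiction | omega
  · by_cases hy1 : y = 1
    · rw [hy1, Equiv.swap_apply_right]
      simp only [X5, X6, Matrix.of_apply, v1 hn, show ((0 : Fin (n+1)) : ℕ) = 0 from rfl]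
      split_ifs <;> first | contradiction | omega
    · rw [Equiv.swap_apply_of_ne_of_ne hy0 hy1]
      have hv0 : (y:ℕ) ≠ 0 := by
        intro h; exact hy0 (Fin.ext (by rw [h]; rfl))
      have hv1 : (y:ℕ) ≠ 1 := by
        intro h; exact hy1 (Fin.ext (by rw [h, v1 hn]))
      simp only [X5, X6, Matrix.of_apply]
      split_ifs <;> first | contradiction | omega

lemma step7 (hn : 2 ≤ n) : X6 n * (1 + Sqb n) = X7 n := by
  ext x y
  rw [Sqb, mul_add, mul_one, Matrix.add_apply, colop_mul]
  simp only [X6, X7, Matrix.of_apply, show ((0 : Fin (n+1)) : ℕ) = 0 from rfl]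
  split_ifs <;> first | contradiction | omega

lemma step8 (hn : 2 ≤ n) : X7 n * (1 + Sqc n) = X8 n := by
  ext x y
  rw [Sqc, mul_add, mul_one, Matrix.add_apply, colop_mul]
  simp only [X7, X8, Matrix.of_apply, v1 hn]
  split_ifs <;> first | contradiction | omega

lemma step9 (hn : 2 ≤ n) : X8 n * (1 + Sqd n) = Tm n := by
  have key : ∀ x : Fin (n+1),
      (∑ k : Fin (n+1), if 2 ≤ (k:ℕ) ∧ (k:ℕ) < n then X8 n x k * 1 else 0)
        = (if (x:ℕ) ≤ 1 then 0 else if (x:ℕ) < n then 2 else 0) := by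
    intro x
    by_cases hx1 : (x:ℕ) ≤ 1
    · rw [if_pos hx1]
      apply Finset.sum_eq_zero
      intro k _
      simp only [X8, Matrix.of_apply, v1 hn]
      split_ifs <;> first | contradiction | omega
    · rw [if_neg hx1]
      by_cases hxn : (x:ℕ) < n
      · rw [if_pos hxn]
        have hpt : ∀ k : Fin (n+1),
            (if 2 ≤ (k:ℕ) ∧ (k:ℕ) < n then X8 n x k * 1 else 0)
              = if k = x then 2 else 0 := by
          intro k
          have hval : k = x ↔ (k:ℕ) = (x:ℕ) := Fin.ext_iff
          simp only [X8, Matrix.of_apply, v1 hn, hval]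
          split_ifs <;> first | contradiction | omega
        rw [Finset.sum_congr rfl (fun k _ => hpt k), Finset.sum_ite_eq']
        simp
      · rw [if_neg hxn]
        apply Finset.sum_eq_zero
        intro k _
        simp only [X8, Matrix.of_apply, v1 hn]
        split_ifs <;> first | contradiction | omega
  ext x y
  rw [Sqd, mul_add, mul_one, Matrix.add_apply, mul_densecol]
  have hdiag : Tm n x y = if (x:ℕ) = (y:ℕ) then
      (if (x:ℕ) < 2 then (1:ℤ) else if (x:ℕ) < n then 2 else 2*n) else 0 := by
    rw [Tm, Matrix.diagonal_apply]
    by_cases h : x = y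
    · subst h; simp
    · rw [if_neg h, if_neg (fun hh => h (Fin.ext hh))]
  rw [hdiag]
  by_cases hy : y = Fin.last n
  · rw [if_pos hy, key x, hy]
    simp only [X8, Matrix.of_apply, Fin.val_last]
    split_ifs <;> first | contradiction | omega
  · rw [if_neg hy, add_zero]
    have hy' : (y:ℕ) ≠ n := by
      intro h; exact hy (Fin.ext (by rw [h, Fin.val_last]))
    simp only [X8, Matrix.of_apply]
    split_ifs <;> first | contradiction | omega

end TreeSNF

namespace TreeSNF
variable {n : ℕ}

lemma mulSa : Sa n * Sa n = 0 := by
  ext x y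
  rw [Sa, rowop_mul]
  simp [show ((0 : Fin (n+1)) : ℕ) = 0 from rfl]

lemma mulSb (hn : 2 ≤ n) : Sb n * Sb n = 0 := by
  ext x y
  rw [Sb, rowop_mul]
  have hc : ¬(2 ≤ ((1 : Fin (n+1)) : ℕ) ∧ y = (1 : Fin (n+1))) := by
    rintro ⟨h2, _⟩; rw [v1 hn] at h2; omega
  simp [hc]
  intro _ h2
  rw [Nat.mod_eq_of_lt (by omega)] at h2
  exact absurd h2 (by omega)

lemma mulSc : Sc n * Sc n = 0 := by
  ext x y
  rw [Sc, rowop_mul]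
  simp [Fin.val_last]

lemma mulSd : Sd n * Sd n = 0 := by
  ext x y
  rw [Sd, denserow_mul]
  rw [show (0 : Matrix (Fin (n+1)) (Fin (n+1)) ℤ) x y = 0 from rfl]
  split_ifs with h
  · apply Finset.sum_eq_zero
    intro k _
    simp only [Matrix.of_apply]
    split_ifs with h1 h2
    · exfalso
      have hv := congrArg Fin.val h2.1
      rw [Fin.val_last] at hv
      omega
    · rfl
    · rfl
  · rfl

lemma mulSqb : Sqb n * Sqb n = 0 := by
  ext x y
  rw [Sqb, colop_mul]
  simp [show ((0 : Fin (n+1)) : ℕ) = 0 from rfl]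

lemma mulSqc (hn : 2 ≤ n) : Sqc n * Sqc n = 0 := by
  ext x y
  rw [Sqc, colop_mul]
  have hc : ¬(2 ≤ ((1 : Fin (n+1)) : ℕ) ∧ x = (1 : Fin (n+1))) := by
    rintro ⟨h2, _⟩; rw [v1 hn] at h2; omega
  simp [hc]
  intro _ h2
  rw [Nat.mod_eq_of_lt (by omega)] at h2
  exact absurd h2 (by omega)

lemma mulSqd : Sqd n * Sqd n = 0 := by
  ext x y
  rw [Sqd, mul_densecol]
  rw [show (0 : Matrix (Fin (n+1)) (Fin (n+1)) ℤ) x y = 0 from rfl]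
  split_ifs with h
  · apply Finset.sum_eq_zero
    intro k _
    simp only [Matrix.of_apply]
    split_ifs with h1 h2
    · exfalso
      have hv := congrArg Fin.val h2.1
      rw [Fin.val_last] at hv
      omega
    · rfl
    · rfl
  · rfl

lemma PePe : Pe n * Pe n = 1 := by
  rw [Pe, Matrix.diagonal_mul_diagonal]
  have h : (fun i : Fin (n+1) =>
      (if (i:ℕ) ≤ 1 then (1:ℤ) else -1) * (if (i:ℕ) ≤ 1 then (1:ℤ) else -1)) = fun _ => 1 := by
    funext i; split_ifs <;> norm_num
  rw [h, Matrix.diagonal_one]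

lemma QaQa : Qa n * Qa n = 1 := by
  ext x y
  rw [Qa, mul_permcol]
  simp [Equiv.swap_apply_self, Matrix.one_apply]

end TreeSNF

open TreeSNF in
lemma graph_M {n : ℕ} (hn : 2 ≤ n) (G : SimpleGraph (Fin (n+1)))
    (hG : G.Connected) (hac : G.IsAcyclic) :
    ∃ P1 : Matrix (Fin (n+1)) (Fin (n+1)) ℤ, IsUnit P1.det ∧
      P1 * (Matrix.of fun i j => (G.dist i j : ℤ)) * P1ᵀ = TreeSNF.M n := by
  classical
  have hpar : ∀ x : Fin (n+1), ∃ w, x ≠ 0 → (G.Adj x w ∧ G.dist 0 w + 1 = G.dist 0 x) := by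
    intro x
    by_cases h : x = 0
    · exact ⟨0, fun h' => absurd h h'⟩
    · obtain ⟨w, hw1, hw2⟩ := exists_parent hG h
      exact ⟨w, fun _ => ⟨hw1, hw2⟩⟩
  choose π hπ using hpar
  set N : Matrix (Fin (n+1)) (Fin (n+1)) ℤ :=
    Matrix.of fun i k => if i ≠ 0 ∧ k = π i then (1:ℤ) else 0 with hN
  have key : ∀ k, ∀ x y : Fin (n+1), (N ^ k) x y ≠ 0 → k ≤ G.dist 0 x := by
    intro k
    induction k with
    | zero => intro x y _; exact Nat.zero_le _
    | succ k ih =>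
      intro x y h
      rw [pow_succ', hN, rowop_mul] at h
      by_cases hx : x ≠ 0
      · rw [if_pos hx, one_mul] at h
        rw [← hN] at h
        have h2 := ih (π x) y h
        have h3 := (hπ x hx).2
        omega
      · rw [if_neg hx] at h
        exact absurd rfl h
  have hdle : ∀ x : Fin (n+1), G.dist 0 x ≤ n := by
    intro x
    obtain ⟨p, hp, hpl⟩ := hG.exists_path_of_dist 0 x
    have hlt := hp.length_lt
    rw [Fintype.card_fin] at hlt
    omega
  have hNnil : N ^ (n+1) = 0 := by
    ext x y
    rw [Matrix.zero_apply]
    by_contra hne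
    have h1 := key (n+1) x y hne
    have h2 := hdle x
    omega
  have hP1 : IsUnit (1 - N) := IsNilpotent.isUnit_one_sub ⟨n+1, hNnil⟩
  refine ⟨1 - N, (Matrix.isUnit_iff_isUnit_det _).mp hP1, ?_⟩
  set Dm : Matrix (Fin (n+1)) (Fin (n+1)) ℤ :=
    Matrix.of fun i j => ((G.dist i j : ℕ) : ℤ) with hDm
  have eA : ∀ a b : Fin (n+1),
      ((1 - N) * Dm) a b = Dm a b - (if a ≠ 0 then Dm (π a) b else 0) := by
    intro a b
    rw [sub_mul, one_mul, Matrix.sub_apply, hN, rowop_mul]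
    by_cases h : a ≠ 0 <;> simp [h]
  have eB : ∀ x y : Fin (n+1),
      (((1 - N) * Dm * (1 - N)ᵀ : Matrix (Fin (n+1)) (Fin (n+1)) ℤ)) x y
      = ((1-N)*Dm) x y - (if y ≠ 0 then ((1-N)*Dm) x (π y) * 1 else 0) := by
    intro x y
    rw [Matrix.transpose_sub, Matrix.transpose_one, mul_sub, mul_one, Matrix.sub_apply]
    congr 1
    rw [hN, mul_rowop_transpose]
  ext x y
  rw [eB, eA, eA]
  have hdm : ∀ a b : Fin (n+1), Dm a b = ((G.dist a b : ℕ) : ℤ) := fun a b => rfl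
  simp only [hdm]
  by_cases hx : x = 0 <;> by_cases hy : y = 0
  · subst hx; subst hy
    simp [TreeSNF.M, SimpleGraph.dist_self]
  · subst hx
    have h1 := (hπ y hy).2
    have hyv : ¬((y:ℕ) = 0) := fun h => hy (Fin.ext h)
    simp only [TreeSNF.M, Matrix.of_apply]
    simp [hy, hyv]
    omega
  · subst hy
    have h1 := (hπ x hx).2
    have hc1 : G.dist x 0 = G.dist 0 x := SimpleGraph.dist_comm
    have hc2 : G.dist (π x) 0 = G.dist 0 (π x) := SimpleGraph.dist_comm
    have hxv : ¬((x:ℕ) = 0) := fun h => hx (Fin.ext h)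
    simp only [TreeSNF.M, Matrix.of_apply]
    simp [hx, hxv]
    omega
  · have hax := (hπ x hx).1
    have hdx := (hπ x hx).2
    have hay := (hπ y hy).1
    have hdy := (hπ y hy).2
    have hxv : ¬((x:ℕ) = 0) := fun h => hx (Fin.ext h)
    have hyv : ¬((y:ℕ) = 0) := fun h => hy (Fin.ext h)
    by_cases hxy : x = y
    · subst hxy
      have had : G.dist x (π x) = 1 := SimpleGraph.dist_eq_one_iff_adj.mpr hax
      have had2 : G.dist (π x) x = G.dist x (π x) := SimpleGraph.dist_comm
      have hds : G.dist x x = 0 := SimpleGraph.dist_self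
      have hds2 : G.dist (π x) (π x) = 0 := SimpleGraph.dist_self
      simp only [TreeSNF.M, Matrix.of_apply]
      simp [hx, hxv]
      omega
    · have hq := quad hG hac hax hay hdx hdy hxy
      have hvxy : ¬((x:ℕ) = (y:ℕ)) := fun h => hxy (Fin.ext h)
      simp only [TreeSNF.M, Matrix.of_apply]
      simp [hx, hy, hxv, hyv, hvxy]
      omega

open TreeSNF in
theorem stmt_15 (n : ℕ) (hn : 2 ≤ n) (G : SimpleGraph (Fin (n+1)))
    (hG : G.Connected) (hac : G.IsAcyclic) :
    ∃ P Q : Matrix (Fin (n+1)) (Fin (n+1)) ℤ, IsUnit P.det ∧ IsUnit Q.det ∧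
      P * (Matrix.of fun i j => (G.dist i j : ℤ)) * Q =
        Matrix.diagonal (fun i : Fin (n+1) =>
          if (i : ℕ) < 2 then (1 : ℤ)
          else if (i : ℕ) < n then 2
          else 2 * n) := by
  classical
  obtain ⟨P1, hP1det, hP1M⟩ := graph_M hn G hG hac
  refine ⟨Pe n * (1 + Sd n) * (1 + Sc n) * (1 + Sb n) * (1 + Sa n) * P1,
          P1ᵀ * Qa n * (1 + Sqb n) * (1 + Sqc n) * (1 + Sqd n), ?_, ?_, ?_⟩
  · have u1 : IsUnit (Pe n).det := Matrix.isUnit_det_of_right_inverse PePe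
    have u2 : IsUnit (1 + Sd n).det :=
      Matrix.isUnit_det_of_right_inverse (one_add_mul_one_sub mulSd)
    have u3 : IsUnit (1 + Sc n).det :=
      Matrix.isUnit_det_of_right_inverse (one_add_mul_one_sub mulSc)
    have u4 : IsUnit (1 + Sb n).det :=
      Matrix.isUnit_det_of_right_inverse (one_add_mul_one_sub (mulSb hn))
    have u5 : IsUnit (1 + Sa n).det :=
      Matrix.isUnit_det_of_right_inverse (one_add_mul_one_sub mulSa)
    simp only [Matrix.det_mul]
    exact ((((u1.mul u2).mul u3).mul u4).mul u5).mul hP1det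
  · have uT : IsUnit (P1ᵀ).det := by rw [Matrix.det_transpose]; exact hP1det
    have u1 : IsUnit (Qa n).det := Matrix.isUnit_det_of_right_inverse QaQa
    have u2 : IsUnit (1 + Sqb n).det :=
      Matrix.isUnit_det_of_right_inverse (one_add_mul_one_sub mulSqb)
    have u3 : IsUnit (1 + Sqc n).det :=
      Matrix.isUnit_det_of_right_inverse (one_add_mul_one_sub (mulSqc hn))
    have u4 : IsUnit (1 + Sqd n).det :=
      Matrix.isUnit_det_of_right_inverse (one_add_mul_one_sub mulSqd)
    simp only [Matrix.det_mul]
    exact (((uT.mul u1).mul u2).mul u3).mul u4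
  · have hfinal : Pe n * ((1 + Sd n) * ((1 + Sc n) * ((1 + Sb n) * ((1 + Sa n) *
        (P1 * (Matrix.of fun i j => (G.dist i j : ℤ)) * P1ᵀ))))) * Qa n * (1 + Sqb n) *
        (1 + Sqc n) * (1 + Sqd n) = Tm n := by
      rw [hP1M, step1 hn, step2 hn, step3 hn, step4 hn, step5 hn, step6 hn, step7 hn,
        step8 hn, step9 hn]
    have hassoc : Pe n * (1 + Sd n) * (1 + Sc n) * (1 + Sb n) * (1 + Sa n) * P1 *
        (Matrix.of fun i j => (G.dist i j : ℤ)) *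
        (P1ᵀ * Qa n * (1 + Sqb n) * (1 + Sqc n) * (1 + Sqd n))
        = Pe n * ((1 + Sd n) * ((1 + Sc n) * ((1 + Sb n) * ((1 + Sa n) *
        (P1 * (Matrix.of fun i j => (G.dist i j : ℤ)) * P1ᵀ))))) * Qa n * (1 + Sqb n) *
        (1 + Sqc n) * (1 + Sqd n) := by
      simp only [Matrix.mul_assoc]
    rw [hassoc, hfinal]
    rfl
end

section
/- For k ≥ 1 and m ≥ 2, the cokernel of the (mk+1)×(mk+1) block matrix with (0,0)-entry 0, first row and column otherwise all ones, and lower-right block-diagonal part consisting of m copies of -J_k - I_k, is isomorphic to (ℤ/(k+1)ℤ)^{m-2} ⊕ ℤ/(k(k+1)m)ℤ. -/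
namespace Stmt19
variable (m k : ℕ)

def idx (b : Fin m) (r : Fin k) : Fin (m*k+1) := (finProdFinEquiv (b, r)).succ

lemma idx_val (b : Fin m) (r : Fin k) : (idx m k b r : ℕ) = (r:ℕ) + k*(b:ℕ) + 1 := rfl

lemma idx_val_ne (b : Fin m) (r : Fin k) : (idx m k b r : ℕ) ≠ 0 := by
  rw [idx_val]; omega

lemma blk_idx (b : Fin m) (r : Fin k) : ((idx m k b r : ℕ) - 1)/k = (b:ℕ) := by
  rw [idx_val]
  have hk : 0 < k := r.pos
  simp [Nat.add_mul_div_left _ _ hk, Nat.div_eq_of_lt r.2]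

lemma idx_inj {b b' : Fin m} {r r' : Fin k} (h : idx m k b r = idx m k b' r') :
    b = b' ∧ r = r' := by
  have h1 : (finProdFinEquiv (b, r) : Fin (m*k)) = finProdFinEquiv (b', r') :=
    Fin.succ_injective _ h
  have := finProdFinEquiv.injective h1
  exact ⟨congrArg Prod.fst this, congrArg Prod.snd this⟩

lemma sum_split (f : Fin (m*k+1) → ℤ) :
    ∑ i, f i = f 0 + ∑ b : Fin m, ∑ r : Fin k, f (idx m k b r) := by
  rw [Fin.sum_univ_succ]
  congr 1
  rw [← Equiv.sum_comp finProdFinEquiv (fun i => f i.succ), Fintype.sum_prod_type]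
  rfl

lemma idx_cases (i : Fin (m*k+1)) : i = 0 ∨ ∃ b r, i = idx m k b r := by
  rcases Fin.eq_zero_or_eq_succ i with h | ⟨j, rfl⟩
  · exact Or.inl h
  · right
    obtain ⟨⟨b, r⟩, hb⟩ := finProdFinEquiv.surjective j
    exact ⟨b, r, by rw [idx, hb]⟩

lemma blk_lt (hm : 2 ≤ m) (hk : 1 ≤ k) (i : Fin (m*k+1)) : ((i:ℕ)-1)/k < m := by
  have h2 := i.2
  have hmk : 0 < m*k := Nat.mul_pos (by omega) (by omega)
  have h3 : (i:ℕ) - 1 < k*m := by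
    have : k*m = m*k := Nat.mul_comm k m
    omega
  exact Nat.div_lt_of_lt_mul h3

lemma val_eq_iff (t : ℕ) (ht : t < m) (b : Fin m) : ((b:ℕ) = t) = (b = ⟨t, ht⟩) :=
  propext ⟨fun h => Fin.ext h, fun h => congrArg Fin.val h⟩

def τv : Fin (m*k+1) → ℤ := fun i =>
  if (i:ℕ) = 0 then (k+1) else if ((i:ℕ)-1)/k = 1 then 1 + k*m else 1

def σv (jj : Fin (m-2)) : Fin (m*k+1) → ℤ := fun i =>
  if (i:ℕ) = 0 then 0 else if ((i:ℕ)-1)/k = 1 then -1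
  else if ((i:ℕ)-1)/k = (jj:ℕ)+2 then 1 else 0

lemma τv_zero : τv m k 0 = (k:ℤ)+1 := by simp [τv]

lemma σv_zero (jj) : σv m k jj 0 = 0 := by simp [σv]

lemma τv_idx (b : Fin m) (r : Fin k) :
    τv m k (idx m k b r) = if (b:ℕ) = 1 then 1 + (k:ℤ)*m else 1 := by
  rw [τv]
  rw [if_neg (idx_val_ne m k b r), blk_idx]

lemma σv_idx (jj) (b : Fin m) (r : Fin k) :
    σv m k jj (idx m k b r) =
      if (b:ℕ) = 1 then -1 else if (b:ℕ) = (jj:ℕ)+2 then 1 else 0 := by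
  rw [σv]
  rw [if_neg (idx_val_ne m k b r), blk_idx]

def Φ : (Fin (m*k+1) → ℤ) →ₗ[ℤ] ((Fin (m-2) → ZMod (k+1)) × ZMod (k*(k+1)*m)) where
  toFun c := (fun jj => ((∑ i, c i * σv m k jj i : ℤ) : ZMod (k+1)),
    ((∑ i, c i * τv m k i : ℤ) : ZMod (k*(k+1)*m)))
  map_add' c d := by
    refine Prod.ext (funext fun jj => ?_) ?_ <;>
      simp [add_mul, Finset.sum_add_distrib]
  map_smul' z c := by
    refine Prod.ext (funext fun jj => ?_) ?_ <;>
      simp [smul_eq_mul, mul_assoc, Finset.mul_sum, Prod.smul_def, zsmul_eq_mul,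
        Pi.smul_apply]

section WithB
variable (B : Matrix (Fin (m*k+1)) (Fin (m*k+1)) ℤ)
variable (hB : ∀ i j : Fin (m * k + 1), B i j =
      if (i : ℕ) = 0 ∧ (j : ℕ) = 0 then 0
      else if (i : ℕ) = 0 ∨ (j : ℕ) = 0 then 1
      else if ((i : ℕ) - 1) / k = ((j : ℕ) - 1) / k then
        (if i = j then -2 else -1) else 0)

include hB

lemma B00 : B 0 0 = 0 := by rw [hB]; simp

lemma B0i (b r) : B 0 (idx m k b r) = 1 := by
  rw [hB]
  have := idx_val_ne m k b r
  simp [this]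

lemma Bi0 (b r) : B (idx m k b r) 0 = 1 := by
  rw [hB]
  have := idx_val_ne m k b r
  simp [this]

lemma Bii (b b' : Fin m) (r r' : Fin k) :
    B (idx m k b r) (idx m k b' r') =
      if b = b' then (if r = r' then -2 else -1) else 0 := by
  rw [hB]
  rw [if_neg (by simp [idx_val_ne m k b r]), if_neg (by simp [idx_val_ne m k b r, idx_val_ne m k b' r']),
    blk_idx, blk_idx]
  by_cases hbb : b = b'
  · subst hbb
    rw [if_pos rfl, if_pos rfl]
    by_cases hrr : r = r'
    · subst hrr; simp
    · rw [if_neg (fun h => hrr (idx_inj m k h).2), if_neg hrr]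
  · rw [if_neg (fun h => hbb (Fin.ext h)), if_neg hbb]

end WithB
end Stmt19

namespace Stmt19
variable (m k : ℕ)

lemma sum_c_σ (c : Fin (m*k+1) → ℤ) (jj : Fin (m-2))
    (b1 bJ : Fin m) (hb1 : (b1:ℕ) = 1) (hbJ : (bJ:ℕ) = (jj:ℕ)+2) :
    ∑ i, c i * σv m k jj i =
      (∑ r, c (idx m k bJ r)) - ∑ r, c (idx m k b1 r) := by
  rw [sum_split, σv_zero, mul_zero, zero_add]
  have step : ∀ b : Fin m, (∑ r, c (idx m k b r) * σv m k jj (idx m k b r)) =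
      (if b = bJ then (∑ r, c (idx m k b r)) else 0)
      - (if b = b1 then (∑ r, c (idx m k b r)) else 0) := by
    intro b
    simp only [σv_idx, ← Finset.sum_mul]
    split_ifs <;> simp_all [Fin.ext_iff] <;> first | ring | omega
  simp only [step, Finset.sum_sub_distrib, Finset.sum_ite_eq', Finset.mem_univ,
    if_pos]

lemma sum_c_τ (c : Fin (m*k+1) → ℤ) (b1 : Fin m) (hb1 : (b1:ℕ) = 1) :
    ∑ i, c i * τv m k i =
      ((k:ℤ)+1) * c 0 + (∑ b, ∑ r, c (idx m k b r))
        + (k*m) * ∑ r, c (idx m k b1 r) := by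
  rw [sum_split, τv_zero]
  have step : ∀ b : Fin m, (∑ r, c (idx m k b r) * τv m k (idx m k b r)) =
      (∑ r, c (idx m k b r))
      + (if b = b1 then ((k:ℤ)*m) * (∑ r, c (idx m k b r)) else 0) := by
    intro b
    simp only [τv_idx, ← Finset.sum_mul]
    split_ifs <;> simp_all [Fin.ext_iff] <;> first | ring | omega
  simp only [step, Finset.sum_add_distrib, Finset.sum_ite_eq', Finset.mem_univ,
    if_pos]
  ring

end Stmt19

namespace Stmt19
variable (m k : ℕ)

section Cols
variable (B : Matrix (Fin (m*k+1)) (Fin (m*k+1)) ℤ)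
variable (hB : ∀ i j : Fin (m * k + 1), B i j =
      if (i : ℕ) = 0 ∧ (j : ℕ) = 0 then 0
      else if (i : ℕ) = 0 ∨ (j : ℕ) = 0 then 1
      else if ((i : ℕ) - 1) / k = ((j : ℕ) - 1) / k then
        (if i = j then -2 else -1) else 0)
include hB

lemma blocksum_col0 (b : Fin m) : ∑ r : Fin k, B (idx m k b r) 0 = (k:ℤ) := by
  simp [Bi0 m k B hB]

lemma blocksum_col (b b' : Fin m) (r' : Fin k) :
    ∑ r : Fin k, B (idx m k b r) (idx m k b' r') =
      if b = b' then -((k:ℤ)+1) else 0 := by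
  by_cases hbb : b = b'
  · subst hbb
    rw [if_pos rfl]
    have step : ∀ r : Fin k, B (idx m k b r) (idx m k b r') =
        -1 + (if r = r' then (-1:ℤ) else 0) := by
      intro r
      rw [Bii m k B hB, if_pos rfl]
      split_ifs <;> ring
    simp only [step, Finset.sum_add_distrib, Finset.sum_const, Finset.card_univ,
      Fintype.card_fin, Finset.sum_ite_eq', Finset.mem_univ, if_pos]
    push_cast
    ring
  · simp [Bii m k B hB, hbb]

lemma col_σ_dvd (hm : 2 ≤ m) (hk : 1 ≤ k) (jj : Fin (m-2)) (j : Fin (m*k+1)) :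
    ((k:ℤ)+1) ∣ ∑ i, B i j * σv m k jj i := by
  have h1 : (1:ℕ) < m := by omega
  have hJ : (jj:ℕ)+2 < m := by have := jj.2; omega
  have hb1bJ : (⟨1, h1⟩ : Fin m) ≠ ⟨(jj:ℕ)+2, hJ⟩ := by
    simp [Fin.ext_iff]
  rw [sum_c_σ m k _ jj ⟨1, h1⟩ ⟨(jj:ℕ)+2, hJ⟩ rfl rfl]
  rcases idx_cases m k j with rfl | ⟨b', r', rfl⟩
  · rw [blocksum_col0 m k B hB, blocksum_col0 m k B hB]
    simp
  · rw [blocksum_col m k B hB, blocksum_col m k B hB]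
    split_ifs <;> [simp; exact ⟨-1, by ring⟩; exact ⟨1, by ring⟩; simp]

lemma col_τ_dvd (hm : 2 ≤ m) (hk : 1 ≤ k) (j : Fin (m*k+1)) :
    ((k:ℤ)*(k+1)*m) ∣ ∑ i, B i j * τv m k i := by
  have h1 : (1:ℕ) < m := by omega
  rw [sum_c_τ m k _ ⟨1, h1⟩ rfl]
  rcases idx_cases m k j with rfl | ⟨b', r', rfl⟩
  · rw [B00 m k B hB, blocksum_col0 m k B hB]
    simp only [mul_zero, add_zero, zero_add]
    have : ∀ b : Fin m, (∑ r : Fin k, B (idx m k b r) 0) = (k:ℤ) :=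
      blocksum_col0 m k B hB
    rw [Finset.sum_congr rfl fun b _ => this b, Finset.sum_const,
      Finset.card_univ, Fintype.card_fin]
    exact ⟨1, by push_cast; ring⟩
  · rw [B0i m k B hB, blocksum_col m k B hB]
    have : ∀ b : Fin m, (∑ r : Fin k, B (idx m k b r) (idx m k b' r')) =
        if b = b' then -((k:ℤ)+1) else 0 := fun b => blocksum_col m k B hB b b' r'
    rw [Finset.sum_congr rfl fun b _ => this b]
    rw [Finset.sum_ite_eq', if_pos (Finset.mem_univ _)]
    split_ifs
    · exact ⟨-1, by push_cast; ring⟩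
    · exact ⟨0, by push_cast; ring⟩

end Cols
end Stmt19

namespace Stmt19
variable (m k : ℕ)

lemma Φ_single (i : Fin (m*k+1)) : Φ m k (Pi.single i 1) =
    (fun jj => ((σv m k jj i : ℤ) : ZMod (k+1)),
      ((τv m k i : ℤ) : ZMod (k*(k+1)*m))) := by
  have hsum : ∀ (g : Fin (m*k+1) → ℤ),
      (∑ i', (Pi.single i 1 : Fin (m*k+1) → ℤ) i' * g i') = g i := by
    intro g
    simp [Pi.single_apply, ite_mul]
  show (_, _) = (_, _)
  refine Prod.ext (funext fun jj => ?_) ?_ <;> simp only [hsum]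

lemma Φ_gen0 (hm0 : 0 < m) (hk0 : 0 < k) :
    Φ m k (Pi.single (idx m k ⟨0, hm0⟩ ⟨0, hk0⟩) 1) = (0, 1) := by
  rw [Φ_single]
  refine Prod.ext (funext fun jj => ?_) ?_
  · show ((σv m k jj (idx m k ⟨0, hm0⟩ ⟨0, hk0⟩) : ℤ) : ZMod (k+1)) = _
    rw [σv_idx]
    norm_num
  · show ((τv m k (idx m k ⟨0, hm0⟩ ⟨0, hk0⟩) : ℤ) : ZMod (k*(k+1)*m)) = _
    rw [τv_idx]
    norm_num

lemma Φ_genJ (hk0 : 0 < k) (jj : Fin (m-2)) (hJ : (jj:ℕ)+2 < m) :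
    Φ m k (Pi.single (idx m k ⟨(jj:ℕ)+2, hJ⟩ ⟨0, hk0⟩) 1) =
      (fun jj' => ((Pi.single jj 1 : Fin (m-2) → ZMod (k+1)) jj'), 1) := by
  rw [Φ_single]
  refine Prod.ext (funext fun jj' => ?_) ?_
  · show ((σv m k jj' (idx m k ⟨(jj:ℕ)+2, hJ⟩ ⟨0, hk0⟩) : ℤ) : ZMod (k+1))
        = (Pi.single jj 1 : Fin (m-2) → ZMod (k+1)) jj'
    rw [σv_idx]
    rw [if_neg (by simp), Pi.single_apply]
    by_cases h : jj' = jj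
    · rw [if_pos (show ((⟨(jj:ℕ)+2, hJ⟩ : Fin m) : ℕ) = (jj':ℕ)+2 by rw [h]), if_pos h]
      norm_num
    · rw [if_neg (fun hc => h (Fin.ext (by
        have hc' : (jj:ℕ)+2 = (jj':ℕ)+2 := hc
        omega : (jj':ℕ) = (jj:ℕ)))), if_neg h]
      norm_num
  · show ((τv m k (idx m k ⟨(jj:ℕ)+2, hJ⟩ ⟨0, hk0⟩) : ℤ) : ZMod (k*(k+1)*m)) = _
    rw [τv_idx]
    rw [if_neg (by simp)]
    norm_num

lemma Φ_surj (hm : 2 ≤ m) (hk : 1 ≤ k) : Function.Surjective (Φ m k) := by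
  rintro ⟨f, z⟩
  have hk0 : 0 < k := by omega
  have hm0 : 0 < m := by omega
  choose w hw using fun jj => ZMod.intCast_surjective (f jj)
  obtain ⟨z', hz⟩ := ZMod.intCast_surjective z
  have hJlt : ∀ jj : Fin (m-2), (jj:ℕ)+2 < m := fun jj => by have := jj.2; omega
  refine ⟨z' • Pi.single (idx m k ⟨0, hm0⟩ ⟨0, hk0⟩) 1 +
    ∑ jj : Fin (m-2), w jj • (Pi.single (idx m k ⟨(jj:ℕ)+2, hJlt jj⟩ ⟨0, hk0⟩) 1
      - Pi.single (idx m k ⟨0, hm0⟩ ⟨0, hk0⟩) 1), ?_⟩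
  rw [map_add, map_smul, map_sum]
  simp_rw [map_smul, map_sub, Φ_gen0 m k hm0 hk0, Φ_genJ m k hk0 _ (hJlt _)]
  refine Prod.ext (funext fun jj' => ?_) ?_
  · simp only [Prod.fst_add, Prod.smul_fst, Prod.fst_sum, Prod.fst_sub, Pi.add_apply,
      Pi.smul_apply, Pi.sub_apply, Finset.sum_apply, Prod.fst_zero, Pi.zero_apply,
      Prod.fst_one, smul_zero, zero_add, Pi.one_apply, Pi.single_apply, sub_zero]
    simp only [smul_ite, smul_zero, Finset.sum_ite_eq' Finset.univ jj']
    simp [zsmul_eq_mul, hw]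
  · simp only [Prod.snd_add, Prod.smul_snd, Prod.snd_sum, Prod.snd_sub, Prod.snd_zero,
      Prod.snd_one, sub_self, smul_zero, Finset.sum_const_zero, add_zero]
    rw [zsmul_eq_mul, mul_one]
    exact hz
end Stmt19

namespace Stmt19
variable (m k : ℕ)

lemma sum_fin_split (g : Fin m → ℤ) (h0 : 0 < m) (h1 : 1 < m)
    (hJ : ∀ jj : Fin (m-2), (jj:ℕ)+2 < m) :
    ∑ b, g b = g ⟨0,h0⟩ + g ⟨1,h1⟩ + ∑ jj : Fin (m-2), g ⟨(jj:ℕ)+2, hJ jj⟩ := by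
  classical
  set G : ℕ → ℤ := fun t => if h : t < m then g ⟨t,h⟩ else 0 with hG
  have e1 : ∑ b : Fin m, g b = ∑ t ∈ Finset.range m, G t := by
    rw [← Fin.sum_univ_eq_sum_range]
    exact Finset.sum_congr rfl (fun b _ => by simp [hG, b.2])
  have e2 : ∑ jj : Fin (m-2), g ⟨(jj:ℕ)+2, hJ jj⟩ = ∑ t ∈ Finset.range (m-2), G (t+2) := by
    rw [← Fin.sum_univ_eq_sum_range (fun t => G (t+2))]
    refine Finset.sum_congr rfl (fun jj _ => ?_)
    simp only [hG]
    rw [dif_pos (hJ jj)]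
  have e3 : (Finset.range m) = Finset.range ((m-2)+1+1) := by
    rw [show (m-2)+1+1 = m by omega]
  rw [e1, e2, e3, Finset.sum_range_succ', Finset.sum_range_succ']
  have hG0 : G 0 = g ⟨0, h0⟩ := by simp [hG, h0]
  have hG1 : G (0+1) = g ⟨1, h1⟩ := by simp [hG, h1]
  have ht2 : ∀ t, t + 1 + 1 = t + 2 := fun t => rfl
  simp only [ht2, hG0, hG1]
  ring

section Ker
variable (B : Matrix (Fin (m*k+1)) (Fin (m*k+1)) ℤ)
variable (hB : ∀ i j : Fin (m * k + 1), B i j =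
      if (i : ℕ) = 0 ∧ (j : ℕ) = 0 then 0
      else if (i : ℕ) = 0 ∨ (j : ℕ) = 0 then 1
      else if ((i : ℕ) - 1) / k = ((j : ℕ) - 1) / k then
        (if i = j then -2 else -1) else 0)
include hB

lemma ker_le (hm : 2 ≤ m) (hk : 1 ≤ k) (c : Fin (m*k+1) → ℤ)
    (hσ : ∀ jj : Fin (m-2), ((∑ i, c i * σv m k jj i : ℤ) : ZMod (k+1)) = 0)
    (hτ : ((∑ i, c i * τv m k i : ℤ) : ZMod (k*(k+1)*m)) = 0) :
    ∃ lam : Fin (m*k+1) → ℤ, B.mulVec lam = c := by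
  have hm0 : 0 < m := by omega
  have h1m : (1:ℕ) < m := by omega
  have hJlt : ∀ jj : Fin (m-2), (jj:ℕ)+2 < m := fun jj => by have := jj.2; omega
  set b0 : Fin m := ⟨0, hm0⟩ with hb0def
  set b1 : Fin m := ⟨1, h1m⟩ with hb1def
  -- divisibility facts from the hypothesis Φ c = 0
  have Hσ : ∀ jj : Fin (m-2),
      ((k:ℤ)+1) ∣ (∑ r, c (idx m k ⟨(jj:ℕ)+2, hJlt jj⟩ r)) - ∑ r, c (idx m k b1 r) := by
    intro jj
    have h := (ZMod.intCast_zmod_eq_zero_iff_dvd _ _).1 (hσ jj)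
    rw [sum_c_σ m k c jj b1 ⟨(jj:ℕ)+2, hJlt jj⟩ rfl rfl] at h
    push_cast at h
    exact h
  have HN : ((k:ℤ)*(k+1)*m) ∣ ((k:ℤ)+1)*c 0 + (∑ b, ∑ r, c (idx m k b r))
      + ((k:ℤ)*m)*∑ r, c (idx m k b1 r) := by
    have h := (ZMod.intCast_zmod_eq_zero_iff_dvd _ _).1 hτ
    rw [sum_c_τ m k c b1 rfl] at h
    push_cast at h
    exact h
  obtain ⟨t, ht⟩ := HN
  set q : ℤ := (k+1)*t - ∑ r, c (idx m k b1 r) with hqdef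
  have hX : ((k:ℤ)+1)*c 0 + (∑ b, ∑ r, c (idx m k b r)) = ((k:ℤ)*m) * q := by
    rw [hqdef]; linear_combination ht
  have hkq : ((k:ℤ)+1) ∣ q + ∑ r, c (idx m k b1 r) := ⟨t, by rw [hqdef]; ring⟩
  have hsplit : (∑ b, ∑ r, c (idx m k b r)) =
      (∑ r, c (idx m k b0 r)) + (∑ r, c (idx m k b1 r))
      + ∑ jj : Fin (m-2), ∑ r, c (idx m k ⟨(jj:ℕ)+2, hJlt jj⟩ r) :=
    sum_fin_split m (fun b => ∑ r, c (idx m k b r)) hm0 h1m hJlt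
  have Hsig : ((k:ℤ)+1) ∣ (∑ jj : Fin (m-2), ∑ r, c (idx m k ⟨(jj:ℕ)+2, hJlt jj⟩ r))
      - ((m:ℤ)-2) * ∑ r, c (idx m k b1 r) := by
    have h := Finset.dvd_sum (fun jj (_ : jj ∈ Finset.univ) => Hσ jj)
    rw [Finset.sum_sub_distrib, Finset.sum_const, Finset.card_univ, Fintype.card_fin,
      nsmul_eq_mul] at h
    have hc2 : ((m-2 : ℕ) : ℤ) = (m:ℤ)-2 := by
      push_cast [Nat.cast_sub hm]
      ring
    rw [hc2] at h
    exact h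
  have hD1 : ((k:ℤ)+1) ∣ (∑ b, ∑ r, c (idx m k b r)) + (m:ℤ)*q :=
    ⟨(m:ℤ)*q - c 0, by linear_combination hX⟩
  have hab1 : ∀ b : Fin m, ((k:ℤ)+1) ∣ (∑ r, c (idx m k b r)) - ∑ r, c (idx m k b1 r) := by
    intro b
    rcases Nat.lt_or_ge (b:ℕ) 2 with hb2 | hb2
    · rcases Nat.lt_or_ge (b:ℕ) 1 with hb1 | hb1
      · -- b = b0
        have hbe : b = b0 := Fin.ext (show (b:ℕ) = 0 by omega)
        subst hbe
        have key : (∑ r, c (idx m k b0 r)) - (∑ r, c (idx m k b1 r)) =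
            ((∑ b, ∑ r, c (idx m k b r)) + (m:ℤ)*q)
            - ((∑ jj : Fin (m-2), ∑ r, c (idx m k ⟨(jj:ℕ)+2, hJlt jj⟩ r))
                - ((m:ℤ)-2) * ∑ r, c (idx m k b1 r))
            - (m:ℤ)*(q + ∑ r, c (idx m k b1 r)) := by
          rw [hsplit]; ring
        rw [key]
        exact dvd_sub (dvd_sub hD1 Hsig) (hkq.mul_left _)
      · -- b = b1
        have hbe : b = b1 := Fin.ext (show (b:ℕ) = 1 by omega)
        rw [hbe, sub_self]
        exact dvd_zero _
    · -- b = jj+2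
      have hblt := b.2
      have hjlt : (b:ℕ)-2 < m-2 := by omega
      have hbe : (⟨(((⟨(b:ℕ)-2, hjlt⟩ : Fin (m-2)):ℕ))+2, hJlt _⟩ : Fin m) = b :=
        Fin.ext (show ((b:ℕ)-2)+2 = (b:ℕ) by omega)
      rw [← hbe]
      exact Hσ ⟨(b:ℕ)-2, hjlt⟩
  have hab : ∀ b : Fin m, ((k:ℤ)+1) ∣ (k:ℤ)*q - ∑ r, c (idx m k b r) := by
    intro b
    have key : (k:ℤ)*q - (∑ r, c (idx m k b r)) =
        ((k:ℤ)+1)*q - (q + ∑ r, c (idx m k b1 r))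
        - ((∑ r, c (idx m k b r)) - ∑ r, c (idx m k b1 r)) := by ring
    rw [key]
    exact dvd_sub (dvd_sub (dvd_mul_right _ _) hkq) (hab1 b)
  set μ : Fin m → ℤ := fun b => ((k:ℤ)*q - ∑ r, c (idx m k b r))/((k:ℤ)+1) with hμdef
  have hμ : ∀ b, ((k:ℤ)+1) * μ b = (k:ℤ)*q - ∑ r, c (idx m k b r) := fun b => by
    rw [hμdef]; exact Int.mul_ediv_cancel' (hab b)
  have hk1ne : ((k:ℤ)+1) ≠ 0 := by positivity
  have hμsum : ∑ b, μ b = c 0 := by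
    have h1 : ((k:ℤ)+1) * (∑ b, μ b) = ((k:ℤ)+1) * c 0 := by
      rw [Finset.mul_sum]
      rw [Finset.sum_congr rfl (fun b _ => hμ b), Finset.sum_sub_distrib,
        Finset.sum_const, Finset.card_univ, Fintype.card_fin, nsmul_eq_mul]
      linear_combination -hX
    exact mul_left_cancel₀ hk1ne h1
  -- construct the preimage
  refine ⟨fun i => if h : (i:ℕ) = 0 then q
    else q - μ ⟨((i:ℕ)-1)/k, blk_lt m k hm hk i⟩ - c i, funext fun i => ?_⟩
  set lam : Fin (m*k+1) → ℤ := fun i => if h : (i:ℕ) = 0 then q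
    else q - μ ⟨((i:ℕ)-1)/k, blk_lt m k hm hk i⟩ - c i with hlamdef
  have hlam0 : lam 0 = q := by
    rw [hlamdef]
    simp
  have hlami : ∀ b r, lam (idx m k b r) = q - μ b - c (idx m k b r) := by
    intro b r
    rw [hlamdef]
    simp only [dif_neg (idx_val_ne m k b r)]
    have hbe : (⟨(((idx m k b r):ℕ)-1)/k, blk_lt m k hm hk _⟩ : Fin m) = b :=
      Fin.ext (blk_idx m k b r)
    rw [hbe]
  have hrow : ∀ i', B.mulVec lam i' = ∑ j, B i' j * lam j := fun i' => rfl
  rcases idx_cases m k i with rfl | ⟨b', r', rfl⟩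
  · rw [hrow, sum_split m k (fun j => B 0 j * lam j), B00 m k B hB, zero_mul, zero_add]
    have inner : ∀ b : Fin m, (∑ r, B 0 (idx m k b r) * lam (idx m k b r)) =
        (k:ℤ)*q - (k:ℤ)*μ b - ∑ r, c (idx m k b r) := by
      intro b
      rw [Finset.sum_congr rfl (fun r _ => by rw [B0i m k B hB, hlami, one_mul])]
      rw [Finset.sum_sub_distrib, Finset.sum_sub_distrib, Finset.sum_const,
        Finset.sum_const, Finset.card_univ, Fintype.card_fin, nsmul_eq_mul, nsmul_eq_mul]
    rw [Finset.sum_congr rfl (fun b _ => inner b)]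
    rw [Finset.sum_sub_distrib, Finset.sum_sub_distrib, Finset.sum_const,
      Finset.card_univ, Fintype.card_fin, nsmul_eq_mul, ← Finset.mul_sum, hμsum]
    linear_combination -hX
  · rw [hrow, sum_split m k (fun j => B (idx m k b' r') j * lam j),
      Bi0 m k B hB, hlam0, one_mul]
    have inner : ∀ b : Fin m,
        (∑ r, B (idx m k b' r') (idx m k b r) * lam (idx m k b r)) =
        if b = b' then -((k:ℤ)*q - (k:ℤ)*μ b' - ∑ r, c (idx m k b' r))
          - lam (idx m k b' r') else 0 := by
      intro b
      by_cases hbb : b = b'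
      · subst hbb
        rw [if_pos rfl]
        have step : ∀ r : Fin k, B (idx m k b r') (idx m k b r) * lam (idx m k b r) =
            -lam (idx m k b r) + (if r' = r then -lam (idx m k b r) else 0) := by
          intro r
          rw [Bii m k B hB, if_pos rfl]
          split_ifs <;> ring
        rw [Finset.sum_congr rfl (fun r _ => step r)]
        rw [Finset.sum_add_distrib, Finset.sum_ite_eq, if_pos (Finset.mem_univ r')]
        have hLb : ∑ r, lam (idx m k b r) =
            (k:ℤ)*q - (k:ℤ)*μ b - ∑ r, c (idx m k b r) := by
          rw [Finset.sum_congr rfl (fun r _ => hlami b r), Finset.sum_sub_distrib,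
            Finset.sum_sub_distrib, Finset.sum_const, Finset.sum_const, Finset.card_univ,
            Fintype.card_fin, nsmul_eq_mul, nsmul_eq_mul]
        rw [Finset.sum_neg_distrib, hLb]
        ring
      · rw [if_neg hbb]
        rw [Finset.sum_congr rfl (fun r _ => by
          rw [Bii m k B hB, if_neg (fun h => hbb h.symm), zero_mul])]
        simp
    rw [Finset.sum_congr rfl (fun b _ => inner b)]
    rw [Finset.sum_ite_eq', if_pos (Finset.mem_univ b')]
    rw [hlami b' r']
    linear_combination hμ b'

end Ker
end Stmt19

theorem stmt_19 (m k : ℕ) (hm : 2 ≤ m) (hk : 1 ≤ k)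
    (B : Matrix (Fin (m * k + 1)) (Fin (m * k + 1)) ℤ)
    (hB : ∀ i j : Fin (m * k + 1), B i j =
      if (i : ℕ) = 0 ∧ (j : ℕ) = 0 then 0
      else if (i : ℕ) = 0 ∨ (j : ℕ) = 0 then 1
      else if ((i : ℕ) - 1) / k = ((j : ℕ) - 1) / k then
        (if i = j then -2 else -1) else 0) :
    Nonempty (((Fin (m * k + 1) → ℤ) ⧸ LinearMap.range B.mulVecLin) ≃+
      ((Fin (m - 2) → ZMod (k + 1)) × ZMod (k * (k + 1) * m))) := by
  have hcomp : (Stmt19.Φ m k).comp B.mulVecLin = 0 := by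
    apply (Pi.basisFun ℤ (Fin (m*k+1))).ext
    intro j
    rw [LinearMap.comp_apply, Pi.basisFun_apply, Matrix.mulVecLin_apply,
      Matrix.mulVec_single]
    have hfun : (fun i => B i j * 1) = fun i => B i j := by
      funext i; rw [mul_one]
    rw [MulOpposite.op_one, one_smul, LinearMap.zero_apply]
    refine Prod.ext (funext fun jj => ?_) ?_
    · show ((∑ i, B i j * Stmt19.σv m k jj i : ℤ) : ZMod (k+1)) = 0
      rw [ZMod.intCast_zmod_eq_zero_iff_dvd]
      push_cast
      exact Stmt19.col_σ_dvd m k B hB hm hk jj j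
    · show ((∑ i, B i j * Stmt19.τv m k i : ℤ) : ZMod (k*(k+1)*m)) = 0
      rw [ZMod.intCast_zmod_eq_zero_iff_dvd]
      push_cast
      exact Stmt19.col_τ_dvd m k B hB hm hk j
  have hrange : LinearMap.range B.mulVecLin = LinearMap.ker (Stmt19.Φ m k) := by
    apply le_antisymm
    · rintro x ⟨y, rfl⟩
      rw [LinearMap.mem_ker, ← LinearMap.comp_apply, hcomp, LinearMap.zero_apply]
    · intro c hc
      have hc' : Stmt19.Φ m k c = 0 := LinearMap.mem_ker.1 hc
      have hσ : ∀ jj : Fin (m-2), ((∑ i, c i * Stmt19.σv m k jj i : ℤ) : ZMod (k+1)) = 0 :=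
        fun jj => congrFun (congrArg Prod.fst hc') jj
      have hτ : ((∑ i, c i * Stmt19.τv m k i : ℤ) : ZMod (k*(k+1)*m)) = 0 :=
        congrArg Prod.snd hc'
      obtain ⟨lam, hlam⟩ := Stmt19.ker_le m k B hB hm hk c hσ hτ
      exact ⟨lam, hlam⟩
  exact ⟨((Submodule.quotEquivOfEq _ _ hrange).trans
    ((Stmt19.Φ m k).quotKerEquivOfSurjective (Stmt19.Φ_surj m k hm hk))).toAddEquiv⟩
end
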